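/- arXiv:1108.1501 — 9 statements merged into one kernel-verified Lean document; each statement's English description precedes it below -/
import Mathlib

section
/- Let X be a compact metric space and f : X → X a map. Suppose X₁,…,X_N are nonempty open pairwise disjoint subsets with X = ⋃ closure(X_i), and for each i the restriction f|_{X_i} : X_i → f(X_i) is a homeomorphism onto an open set. Then the set X̃ = ⋂_{n≥0} f^{-n}(X ∖ Δ), where Δ = X ∖ ⋃ X_i, is dense in X. -/
open Metric Filter Set

/-- One application of the transformation `F_i(A) = closure (f(A ∩ X_i))`. -/
def atomStep {X : Type*} [MetricSpace X] (f : X → X) (P : Set X) (A : Set X) : Set X :=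
  closure (f '' (A ∩ P))

/-- The atom with itinerary `l = (i₁, …, iₙ)`: `F_{iₙ} ∘ ⋯ ∘ F_{i₁}(X)`. -/
def atomOf {X : Type*} [MetricSpace X] {N : ℕ} (f : X → X) (P : Fin N → Set X)
    (l : List (Fin N)) : Set X :=
  l.foldl (fun A i => atomStep f (P i) A) Set.univ

/-- `Λₙ`: the union of all atoms of generation `n`. -/
def LamN {X : Type*} [MetricSpace X] {N : ℕ} (f : X → X) (P : Fin N → Set X) (n : ℕ) : Set X :=
  ⋃ l ∈ {l : List (Fin N) | l.length = n}, atomOf f P l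

/-- The attractor `Λ = ⋂_{n ≥ 1} Λₙ`. -/
def Lam {X : Type*} [MetricSpace X] {N : ℕ} (f : X → X) (P : Fin N → Set X) : Set X :=
  ⋂ n ∈ {n : ℕ | 1 ≤ n}, LamN f P n

/-- `X̃ = ⋂ₙ f⁻ⁿ(X \ Δ)` where `X \ Δ = ⋃ᵢ Xᵢ`. -/
def tildeSet {X : Type*} {N : ℕ} (f : X → X) (P : Fin N → Set X) : Set X :=
  ⋂ n : ℕ, f^[n] ⁻¹' (⋃ i, P i)

/-- A point is non-wandering if orbits of `X̃`-points in each ball return to it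
at arbitrarily large times. -/
def nonwandering {X : Type*} [MetricSpace X] {N : ℕ} (f : X → X) (P : Fin N → Set X)
    (x : X) : Prop :=
  ∀ ε > 0, ∀ m : ℕ, ∃ n ≥ m, (f^[n] '' (ball x ε ∩ tildeSet f P) ∩ ball x ε).Nonempty

/-- The ω-limit set of a point. -/
def omegaSet {X : Type*} [MetricSpace X] (f : X → X) (x : X) : Set X :=
  {y | MapClusterPt y atTop fun n : ℕ => f^[n] x}

/-- The limit set `L`. -/
def limitSet {X : Type*} [MetricSpace X] {N : ℕ} (f : X → X) (P : Fin N → Set X) : Set X :=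
  closure (⋃ x ∈ tildeSet f P, omegaSet f x)

/-- If each restriction `f|_{Xᵢ} : Xᵢ → f(Xᵢ)` is a homeomorphism onto an open set,
then `X̃ = ⋂ₙ f⁻ⁿ(X ∖ Δ)` is dense in the compact metric space `X`. -/
theorem tildeSet_dense {X : Type*} [MetricSpace X] [CompactSpace X] {N : ℕ}
    (f : X → X) (P : Fin N → Set X)
    (hne : ∀ i, (P i).Nonempty)
    (hop : ∀ i, IsOpen (P i))
    (hdisj : ∀ i j, i ≠ j → Disjoint (P i) (P j))
    (hcov : (⋃ i, closure (P i)) = Set.univ)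
    (hcont : ∀ i, ContinuousOn f (P i))
    (hinj : ∀ i, Set.InjOn f (P i))
    (hopenim : ∀ i, IsOpen (f '' P i))
    (hopenmap : ∀ i, ∀ U : Set X, IsOpen U → IsOpen (f '' (U ∩ P i))) :
    Dense (tildeSet f P) := by
  set U : Set X := ⋃ i, P i with hU
  have hUopen : IsOpen U := isOpen_iUnion hop
  have hUdense : Dense U := by
    rw [dense_iff_closure_eq, Set.eq_univ_iff_forall]
    intro x
    have hx : x ∈ ⋃ i, closure (P i) := by rw [hcov]; trivial
    obtain ⟨i, hi⟩ := Set.mem_iUnion.1 hx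
    exact closure_mono (Set.subset_iUnion P i) hi
  -- recursive finite-level sets
  let T : ℕ → Set X := fun k => Nat.rec U (fun _ Tk => U ∩ f ⁻¹' Tk) k
  have hT0 : T 0 = U := rfl
  have hTsucc : ∀ k, T (k + 1) = U ∩ f ⁻¹' (T k) := fun k => rfl
  -- each T k is open and dense
  have hkey : ∀ k, IsOpen (T k) ∧ Dense (T k) := by
    intro k
    induction k with
    | zero => exact ⟨hUopen, hUdense⟩
    | succ k ih =>
      obtain ⟨ihopen, ihdense⟩ := ih
      constructor
      · rw [hTsucc]
        have : U ∩ f ⁻¹' (T k) = ⋃ i, (P i ∩ f ⁻¹' (T k)) := by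
          rw [hU, Set.iUnion_inter]
        rw [this]
        exact isOpen_iUnion fun i =>
          (hcont i).isOpen_inter_preimage (hop i) ihopen
      · rw [dense_iff_inter_open]
        intro V hV hVne
        obtain ⟨x, hxV, hxU⟩ := hUdense.inter_open_nonempty V hV hVne
        obtain ⟨i, hxi⟩ := Set.mem_iUnion.1 hxU
        have hW : IsOpen (f '' (V ∩ P i)) := hopenmap i V hV
        have hWne : (f '' (V ∩ P i)).Nonempty := ⟨f x, x, ⟨hxV, hxi⟩, rfl⟩
        obtain ⟨y, hyW, hyT⟩ := ihdense.inter_open_nonempty _ hW hWne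
        obtain ⟨z, ⟨hzV, hzi⟩, rfl⟩ := hyW
        refine ⟨z, hzV, ?_⟩
        rw [hTsucc]
        exact ⟨Set.mem_iUnion.2 ⟨i, hzi⟩, hyT⟩
  -- membership in T k means the first k+1 iterates stay in U
  have hmem : ∀ k x, x ∈ T k ↔ ∀ n ≤ k, f^[n] x ∈ U := by
    intro k
    induction k with
    | zero =>
      intro x
      simp only [hT0]
      constructor
      · intro h n hn; interval_cases n; simpa using h
      · intro h; simpa using h 0 le_rfl
    | succ k ih =>
      intro x
      rw [hTsucc]
      constructor
      · rintro ⟨hxU, hfx⟩ n hn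
        cases n with
        | zero => simpa using hxU
        | succ n =>
          rw [Function.iterate_succ_apply]
          exact (ih (f x)).1 hfx n (Nat.succ_le_succ_iff.1 hn)
      · intro h
        refine ⟨by simpa using h 0 (Nat.zero_le _), (ih (f x)).2 fun n hn => ?_⟩
        rw [← Function.iterate_succ_apply]
        exact h (n + 1) (Nat.succ_le_succ hn)
  -- tildeSet = ⋂ k, T k
  have heq : tildeSet f P = ⋂ k, T k := by
    ext x
    simp only [tildeSet, Set.mem_iInter, Set.mem_preimage, hmem, ← hU]
    constructor
    · intro h k n _; exact h n
    · intro h n; exact h n n le_rfl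
  rw [heq]
  exact dense_iInter_of_isOpen (fun k => (hkey k).1) (fun k => (hkey k).2)
end

section
/- For a piecewise contracting map f on a compact locally connected metric space, every point of the limit set L = closure(⋃_{x∈X̃} ω(x)) is non-wandering, i.e. L ⊆ Ω. -/
open Metric Filter Set

lemma tilde_invariant {X : Type*} {N : ℕ} (f : X → X) (P : Fin N → Set X)
    {x : X} (hx : x ∈ tildeSet f P) (k : ℕ) : f^[k] x ∈ tildeSet f P := by
  intro s hs
  simp only [Set.mem_range] at hs
  obtain ⟨n, rfl⟩ := hs
  have := Set.mem_iInter.1 hx (n + k)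
  simpa [Function.iterate_add_apply] using this

/-- For a piecewise contracting map on a compact locally connected metric space,
every point of the limit set is non-wandering: `L ⊆ Ω`. -/
theorem limitSet_subset_nonwandering {X : Type*} [MetricSpace X] [CompactSpace X] [LocallyConnectedSpace X] {N : ℕ}
    (f : X → X) (P : Fin N → Set X) (lam : ℝ)
    (hN : 2 ≤ N)
    (hne : ∀ i, (P i).Nonempty)
    (hop : ∀ i, IsOpen (P i))
    (hdisj : ∀ i j, i ≠ j → Disjoint (P i) (P j))
    (hcov : (⋃ i, closure (P i)) = Set.univ)
    (hlam0 : 0 < lam) (hlam1 : lam < 1)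
    (hctr : ∀ i, ∀ x ∈ P i, ∀ y ∈ P i, dist (f x) (f y) ≤ lam * dist x y)
    (htilde : (tildeSet f P).Nonempty) :
    limitSet f P ⊆ {x | nonwandering f P x} := by
  intro y hy
  intro ε hε m
  obtain ⟨z, hz, hyz⟩ := Metric.mem_closure_iff.1 hy (ε / 2) (by linarith)
  simp only [Set.mem_iUnion] at hz
  obtain ⟨x, hxt, hzx⟩ := hz
  have hfreq : ∃ᶠ n in atTop, f^[n] x ∈ ball z (ε / 2) :=
    mapClusterPt_iff_frequently.1 hzx _ (ball_mem_nhds z (by linarith))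
  obtain ⟨n₁, -, hn₁⟩ := (frequently_atTop.1 hfreq) 0
  obtain ⟨n₂, hn₂ge, hn₂⟩ := (frequently_atTop.1 hfreq) (n₁ + m)
  refine ⟨n₂ - n₁, by omega, f^[n₂] x, ⟨f^[n₁] x, ⟨?_, tilde_invariant f P hxt n₁⟩, ?_⟩, ?_⟩
  · rw [mem_ball]
    have := mem_ball.1 hn₁
    calc dist (f^[n₁] x) y ≤ dist (f^[n₁] x) z + dist z y := dist_triangle _ _ _
      _ < ε / 2 + ε / 2 := by rw [dist_comm z y]; exact add_lt_add this hyz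
      _ = ε := by ring
  · rw [← Function.iterate_add_apply]
    congr 1
    omega
  · rw [mem_ball]
    have := mem_ball.1 hn₂
    calc dist (f^[n₂] x) y ≤ dist (f^[n₂] x) z + dist z y := dist_triangle _ _ _
      _ < ε / 2 + ε / 2 := by rw [dist_comm z y]; exact add_lt_add this hyz
      _ = ε := by ring
end

section
/- For a piecewise contracting map f on a compact locally connected metric space, every non-wandering point belongs to the attractor, i.e. Ω ⊆ Λ, where Λ = ⋂_{n≥1} Λ_n and Λ_n is the union of all atoms of generation n. -/
open Metric Filter Set

section Aux
variable {X : Type*} [MetricSpace X] {N : ℕ} (f : X → X) (P : Fin N → Set X)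

lemma atomStep_mono {Q : Set X} {A B : Set X} (h : A ⊆ B) :
    atomStep f Q A ⊆ atomStep f Q B :=
  closure_mono (Set.image_mono (Set.inter_subset_inter_left _ h))

lemma atomFoldl_mono (l : List (Fin N)) {A B : Set X} (h : A ⊆ B) :
    l.foldl (fun A i => atomStep f (P i) A) A ⊆
      l.foldl (fun A i => atomStep f (P i) A) B := by
  induction l generalizing A B with
  | nil => exact h
  | cons a l ih => exact ih (atomStep_mono f h)

lemma atomFoldl_isClosed (l : List (Fin N)) {A : Set X} (h : IsClosed A) :
    IsClosed (l.foldl (fun A i => atomStep f (P i) A) A) := by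
  induction l generalizing A with
  | nil => exact h
  | cons a l ih => exact ih isClosed_closure

lemma atomOf_isClosed (l : List (Fin N)) : IsClosed (atomOf f P l) :=
  atomFoldl_isClosed f P l isClosed_univ

lemma atomOf_cons_subset (i : Fin N) (l : List (Fin N)) :
    atomOf f P (i :: l) ⊆ atomOf f P l :=
  atomFoldl_mono f P l (Set.subset_univ _)

lemma LamN_succ_subset (n : ℕ) : LamN f P (n + 1) ⊆ LamN f P n := by
  intro z hz
  simp only [LamN, Set.mem_iUnion, Set.mem_setOf_eq] at hz ⊢
  obtain ⟨l, hl, hzl⟩ := hz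
  cases l with
  | nil => simp at hl
  | cons i l =>
    exact ⟨l, by simpa using hl, atomOf_cons_subset f P i l hzl⟩

lemma LamN_antitone {m n : ℕ} (h : m ≤ n) : LamN f P n ⊆ LamN f P m := by
  induction h with
  | refl => exact subset_rfl
  | step h ih => exact (LamN_succ_subset f P _).trans ih

lemma LamN_isClosed (n : ℕ) : IsClosed (LamN f P n) := by
  apply Set.Finite.isClosed_biUnion (List.finite_length_eq (Fin N) n)
  exact fun l _ => atomOf_isClosed f P l

lemma iterate_mem_LamN {y : X} (hy : y ∈ tildeSet f P) (n : ℕ) :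
    f^[n] y ∈ LamN f P n := by
  have hmem : ∀ k : ℕ, f^[k] y ∈ ⋃ i, P i := fun k => by
    have := Set.mem_iInter.mp hy k
    exact this
  choose it hit using fun k => Set.mem_iUnion.mp (hmem k)
  have key : ∀ n : ℕ, f^[n] y ∈ atomOf f P (List.ofFn fun k : Fin n => it k) := by
    intro n
    induction n with
    | zero => simp [atomOf]
    | succ n ih =>
      have hofn : (List.ofFn fun k : Fin (n + 1) => it k)
          = (List.ofFn fun k : Fin n => it k).concat (it n) := by
        rw [List.ofFn_succ']
        simp
      rw [hofn]
      have : atomOf f P ((List.ofFn fun k : Fin n => it k).concat (it n))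
          = atomStep f (P (it n)) (atomOf f P (List.ofFn fun k : Fin n => it k)) := by
        simp [atomOf, List.foldl_concat]
      rw [this, Function.iterate_succ_apply']
      exact subset_closure ⟨f^[n] y, ⟨ih, hit n⟩, rfl⟩
  refine Set.mem_biUnion ?_ (key n)
  simp

end Aux

/-- For a piecewise contracting map on a compact locally connected metric space,
every non-wandering point belongs to the attractor: `Ω ⊆ Λ`. -/
theorem nonwandering_subset_attractor {X : Type*} [MetricSpace X] [CompactSpace X] [LocallyConnectedSpace X] {N : ℕ}
    (f : X → X) (P : Fin N → Set X) (lam : ℝ)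
    (hN : 2 ≤ N)
    (hne : ∀ i, (P i).Nonempty)
    (hop : ∀ i, IsOpen (P i))
    (hdisj : ∀ i j, i ≠ j → Disjoint (P i) (P j))
    (hcov : (⋃ i, closure (P i)) = Set.univ)
    (hlam0 : 0 < lam) (hlam1 : lam < 1)
    (hctr : ∀ i, ∀ x ∈ P i, ∀ y ∈ P i, dist (f x) (f y) ≤ lam * dist x y)
    (htilde : (tildeSet f P).Nonempty) :
    {x | nonwandering f P x} ⊆ Lam f P := by
  intro x hx
  simp only [Lam, Set.mem_iInter, Set.mem_setOf_eq]
  intro n _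
  have hcl : IsClosed (LamN f P n) := LamN_isClosed f P n
  rw [← hcl.closure_eq]
  rw [Metric.mem_closure_iff]
  intro ε hε
  obtain ⟨n', hn', z, hz1, hz2⟩ := hx ε hε n
  obtain ⟨y, ⟨hyb, hyt⟩, rfl⟩ := hz1
  refine ⟨f^[n'] y, LamN_antitone f P hn' (iterate_mem_LamN f P hyt n'), ?_⟩
  rw [dist_comm]
  exact hz2
end

section
/- For a piecewise contracting map on a compact locally connected metric space, any non-wandering point lying in the interior of X̃ is recurrent: if y ∈ int(X̃) is non-wandering, then for every ε > 0 there exists a divergent sequence {n_k} with d(f^{n_k}(y), y) < ε for all k. -/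
open Metric Filter Set Topology

/-- A nonempty preconnected set inside a disjoint union of open sets lies in one of them. -/
lemma connected_subset_piece {X : Type*} [TopologicalSpace X] {N : ℕ} (P : Fin N → Set X)
    (hop : ∀ i, IsOpen (P i)) (hdisj : ∀ i j, i ≠ j → Disjoint (P i) (P j))
    {S : Set X} (hS : IsPreconnected S) (hsub : S ⊆ ⋃ i, P i) (hne : S.Nonempty) :
    ∃ i, S ⊆ P i := by
  obtain ⟨s, hs⟩ := hne
  obtain ⟨i, hi⟩ := mem_iUnion.mp (hsub hs)
  have hvopen : IsOpen (⋃ j ∈ {j : Fin N | j ≠ i}, P j) :=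
    isOpen_biUnion fun j _ => hop j
  have hdisj' : Disjoint (P i) (⋃ j ∈ {j : Fin N | j ≠ i}, P j) := by
    rw [Set.disjoint_iUnion₂_right]
    exact fun j hj => hdisj i j (Ne.symm hj)
  have hsuv : S ⊆ P i ∪ ⋃ j ∈ {j : Fin N | j ≠ i}, P j := by
    intro x hx
    obtain ⟨j, hj⟩ := mem_iUnion.mp (hsub hx)
    by_cases h : j = i
    · exact Or.inl (h ▸ hj)
    · exact Or.inr (mem_iUnion₂.2 ⟨j, h, hj⟩)
  exact ⟨i, hS.subset_left_of_subset_union (hop i) hvopen hdisj' hsuv ⟨s, hs, hi⟩⟩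

/-- Points in a preconnected subset of `X̃` share the itinerary of `y`, so their
orbits contract at rate `lam`. -/
lemma contract_on_connected {X : Type*} [MetricSpace X] {N : ℕ}
    (f : X → X) (P : Fin N → Set X) (lam : ℝ) (hlam0 : 0 ≤ lam)
    (hop : ∀ i, IsOpen (P i))
    (hdisj : ∀ i j, i ≠ j → Disjoint (P i) (P j))
    (hctr : ∀ i, ∀ x ∈ P i, ∀ y ∈ P i, dist (f x) (f y) ≤ lam * dist x y)
    (U : Set X) (hUc : IsPreconnected U) (hUt : U ⊆ tildeSet f P) (hUne : U.Nonempty) :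
    ∀ k : ℕ, IsPreconnected (f^[k] '' U) ∧
      ∀ x ∈ U, ∀ z ∈ U, dist (f^[k] x) (f^[k] z) ≤ lam ^ k * dist x z := by
  have hcont : ∀ i, ContinuousOn f (P i) := by
    intro i
    have : LipschitzOnWith (Real.toNNReal lam) f (P i) := by
      rw [lipschitzOnWith_iff_dist_le_mul]
      intro x hx z hz
      calc dist (f x) (f z) ≤ lam * dist x z := hctr i x hx z hz
        _ = (Real.toNNReal lam : ℝ) * dist x z := by rw [Real.coe_toNNReal lam hlam0]
    exact this.continuousOn
  have hsub : ∀ k : ℕ, f^[k] '' U ⊆ ⋃ i, P i := by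
    intro k w ⟨x, hxU, hw⟩
    have := hUt hxU
    rw [tildeSet, Set.mem_iInter] at this
    exact hw ▸ this k
  intro k
  induction k with
  | zero =>
    refine ⟨by simpa using hUc, fun x _ z _ => ?_⟩
    simp
  | succ k ih =>
    obtain ⟨ihc, ihd⟩ := ih
    obtain ⟨i, hi⟩ := connected_subset_piece P hop hdisj ihc (hsub k)
      (hUne.image _)
    have himg : f^[k + 1] '' U = f '' (f^[k] '' U) := by
      rw [← Set.image_comp, ← Function.iterate_succ' f k]
    constructor
    · rw [himg]
      exact ihc.image f ((hcont i).mono hi)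
    · intro x hx z hz
      have hx' : f^[k] x ∈ P i := hi ⟨x, hx, rfl⟩
      have hz' : f^[k] z ∈ P i := hi ⟨z, hz, rfl⟩
      calc dist (f^[k + 1] x) (f^[k + 1] z)
          = dist (f (f^[k] x)) (f (f^[k] z)) := by
            rw [Function.iterate_succ_apply', Function.iterate_succ_apply']
        _ ≤ lam * dist (f^[k] x) (f^[k] z) := hctr i _ hx' _ hz'
        _ ≤ lam * (lam ^ k * dist x z) := by
            exact mul_le_mul_of_nonneg_left (ihd x hx z hz) hlam0
        _ = lam ^ (k + 1) * dist x z := by ring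

/-- A non-wandering point in the interior of `X̃` is recurrent: its orbit returns
within `ε` of it at arbitrarily large times. -/
theorem nonwandering_interior_recurrent {X : Type*} [MetricSpace X] [CompactSpace X] [LocallyConnectedSpace X] {N : ℕ}
    (f : X → X) (P : Fin N → Set X) (lam : ℝ)
    (hN : 2 ≤ N)
    (hne : ∀ i, (P i).Nonempty)
    (hop : ∀ i, IsOpen (P i))
    (hdisj : ∀ i j, i ≠ j → Disjoint (P i) (P j))
    (hcov : (⋃ i, closure (P i)) = Set.univ)
    (hlam0 : 0 < lam) (hlam1 : lam < 1)
    (hctr : ∀ i, ∀ x ∈ P i, ∀ y ∈ P i, dist (f x) (f y) ≤ lam * dist x y)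
    (htilde : (tildeSet f P).Nonempty)
    (y : X) (hy : y ∈ interior (tildeSet f P)) (hyw : nonwandering f P y) :
    ∀ ε > 0, ∀ m : ℕ, ∃ n ≥ m, dist (f^[n] y) y < ε := by
  intro ε hε m
  -- choose a connected open neighborhood of y inside ball y (ε/2) ∩ interior X̃
  have hnhds : ball y (ε / 2) ∩ interior (tildeSet f P) ∈ 𝓝 y := by
    refine Filter.inter_mem (ball_mem_nhds y (by linarith)) ?_
    exact isOpen_interior.mem_nhds hy
  obtain ⟨V, hVsub, hVopen, hyV, hVconn⟩ :=
    locallyConnectedSpace_iff_subsets_isOpen_isConnected.mp ‹LocallyConnectedSpace X› y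
      _ hnhds
  obtain ⟨r, hr0, hrV⟩ := Metric.isOpen_iff.mp hVopen y hyV
  set ε' : ℝ := min r (ε / 2) with hε'def
  have hε'0 : 0 < ε' := lt_min hr0 (by linarith)
  have hballV : ball y ε' ⊆ V := (ball_subset_ball (min_le_left _ _)).trans hrV
  -- nonwandering gives a return point
  obtain ⟨n, hnm, w, ⟨x, ⟨hxball, hxt⟩, hfx⟩, hwball⟩ := hyw ε' hε'0 m
  refine ⟨n, hnm, ?_⟩
  have hVt : V ⊆ tildeSet f P := fun z hz => interior_subset (hVsub hz).2
  have hxV : x ∈ V := hballV hxball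
  have key := (contract_on_connected f P lam hlam0.le hop hdisj hctr V
    hVconn.isPreconnected hVt ⟨y, hyV⟩ n).2 y hyV x hxV
  have hlamn : lam ^ n ≤ 1 := pow_le_one₀ hlam0.le hlam1.le
  have h1 : dist (f^[n] y) (f^[n] x) ≤ dist y x := by
    calc dist (f^[n] y) (f^[n] x) ≤ lam ^ n * dist y x := key
      _ ≤ 1 * dist y x := by
          exact mul_le_mul_of_nonneg_right hlamn dist_nonneg
      _ = dist y x := one_mul _
  have hdyx : dist y x < ε' := by rw [dist_comm]; exact hxball
  have hfxy : dist (f^[n] x) y < ε' := hfx ▸ hwball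
  have hε'half : ε' ≤ ε / 2 := min_le_right _ _
  calc dist (f^[n] y) y ≤ dist (f^[n] y) (f^[n] x) + dist (f^[n] x) y := dist_triangle _ _ _
    _ < ε' + ε' := add_lt_add (lt_of_le_of_lt h1 hdyx) hfxy
    _ ≤ ε / 2 + ε / 2 := add_le_add hε'half hε'half
    _ = ε := by ring
end

section
/- Let f be a piecewise contracting map such that the number of atoms satisfies (#𝒜_n)·λⁿ → 0 as n → ∞. Then the attractor Λ is totally disconnected. -/
open Metric Filter Set

/-- The family of atoms of generation `n` (as a set of subsets of `X`). -/
def atomFamily {X : Type*} [MetricSpace X] {N : ℕ} (f : X → X) (P : Fin N → Set X)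
    (n : ℕ) : Set (Set X) :=
  {A | ∃ l : List (Fin N), l.length = n ∧ A = atomOf f P l}

/-- Diameter contraction along iterated atom steps. -/
lemma diam_foldl_atomStep {X : Type*} [MetricSpace X] [CompactSpace X] {N : ℕ}
    (f : X → X) (P : Fin N → Set X) {lam : ℝ} (hlam0 : 0 ≤ lam)
    (hctr : ∀ i, ∀ x ∈ P i, ∀ y ∈ P i, dist (f x) (f y) ≤ lam * dist x y) :
    ∀ (l : List (Fin N)) (A : Set X),
      Metric.diam (l.foldl (fun A i => atomStep f (P i) A) A) ≤ lam ^ l.length * Metric.diam A := by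
  intro l
  induction l with
  | nil => intro A; simp
  | cons i l ih =>
    intro A
    have hbA : Bornology.IsBounded A := isCompact_univ.isBounded.subset (subset_univ _)
    have hstep : Metric.diam (atomStep f (P i) A) ≤ lam * Metric.diam A := by
      rw [atomStep, Metric.diam_closure]
      apply Metric.diam_le_of_forall_dist_le (mul_nonneg hlam0 Metric.diam_nonneg)
      rintro z ⟨a, ⟨haA, haP⟩, rfl⟩ w ⟨b, ⟨hbAb, hbP⟩, rfl⟩
      calc dist (f a) (f b) ≤ lam * dist a b := hctr i a haP b hbP
        _ ≤ lam * Metric.diam A :=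
          mul_le_mul_of_nonneg_left (Metric.dist_le_diam_of_mem hbA haA hbAb) hlam0
    simp only [List.foldl_cons, List.length_cons]
    calc Metric.diam (l.foldl (fun A i => atomStep f (P i) A) (atomStep f (P i) A))
        ≤ lam ^ l.length * Metric.diam (atomStep f (P i) A) := ih _
      _ ≤ lam ^ l.length * (lam * Metric.diam A) :=
          mul_le_mul_of_nonneg_left hstep (pow_nonneg hlam0 _)
      _ = lam ^ (l.length + 1) * Metric.diam A := by ring

/-- Atoms with nonempty itinerary are closed. -/
lemma isClosed_atomOf {X : Type*} [MetricSpace X] {N : ℕ} (f : X → X) (P : Fin N → Set X)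
    {l : List (Fin N)} (hl : l ≠ []) : IsClosed (atomOf f P l) := by
  rcases l.eq_nil_or_concat' with rfl | ⟨L, b, rfl⟩
  · exact absurd rfl hl
  · rw [atomOf, List.foldl_append]
    exact isClosed_closure

/-- The chain lemma: a preconnected set covered by a finite family of closed bounded sets
of diameter at most `d'` has all points within `(card + 1) * d'` of each other. -/
lemma dist_le_of_preconnected_cover {X : Type*} [MetricSpace X]
    (𝒮 : Set (Set X)) (hfin : 𝒮.Finite)
    (hcl : ∀ A ∈ 𝒮, IsClosed A) (hbd : ∀ A ∈ 𝒮, Bornology.IsBounded A)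
    {d' : ℝ} (hd' : 0 ≤ d') (hdiam : ∀ A ∈ 𝒮, Metric.diam A ≤ d')
    {t : Set X} (ht : IsPreconnected t) (hcover : t ⊆ ⋃₀ 𝒮)
    {x y : X} (hx : x ∈ t) (hy : y ∈ t) :
    dist x y ≤ ((𝒮.ncard : ℝ) + 1) * d' := by
  classical
  obtain ⟨A₀, hA₀S, hxA₀⟩ := hcover hx
  set m := 𝒮.ncard with hm
  -- iterated neighborhoods of the atom containing x
  let T : ℕ → Set (Set X) := fun k =>
    Nat.rec {A | A ∈ 𝒮 ∧ x ∈ A}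
      (fun _ Tk => Tk ∪ {B | B ∈ 𝒮 ∧ ∃ A ∈ Tk, (A ∩ B).Nonempty}) k
  have hTsucc : ∀ k, T (k + 1) = T k ∪ {B | B ∈ 𝒮 ∧ ∃ A ∈ T k, (A ∩ B).Nonempty} :=
    fun k => rfl
  have hTS : ∀ k, T k ⊆ 𝒮 := by
    intro k
    induction k with
    | zero => intro A hA; exact hA.1
    | succ k ih =>
      intro B hB
      rcases hB with hB | hB
      · exact ih hB
      · exact hB.1
  have hTmono : Monotone T := monotone_nat_of_le_succ (fun k => subset_union_left)
  have hTdist : ∀ k, ∀ B ∈ T k, ∀ w ∈ B, dist x w ≤ ((k : ℝ) + 1) * d' := by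
    intro k
    induction k with
    | zero =>
      intro B hB w hw
      have : dist x w ≤ Metric.diam B :=
        Metric.dist_le_diam_of_mem (hbd B hB.1) hB.2 hw
      have h2 := hdiam B hB.1
      push_cast
      linarith
    | succ k ih =>
      intro B hB w hw
      rcases hB with hB | ⟨hBS, A, hA, z, hzA, hzB⟩
      · have := ih B hB w hw
        have : dist x w ≤ ((k : ℝ) + 1) * d' := this
        push_cast
        linarith
      · have h1 : dist x z ≤ ((k : ℝ) + 1) * d' := ih A hA z hzA
        have h2 : dist z w ≤ Metric.diam B :=
          Metric.dist_le_diam_of_mem (hbd B hBS) hzB hw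
        have h3 := hdiam B hBS
        have := dist_triangle x z w
        push_cast
        linarith
  -- stabilization
  have hstab : ∃ k ≤ m, T (k + 1) = T k := by
    by_contra hc
    push_neg at hc
    have hgrow : ∀ k, k ≤ m + 1 → k + 1 ≤ (T k).ncard := by
      intro k
      induction k with
      | zero =>
        intro _
        have hne : (T 0).Nonempty := ⟨A₀, hA₀S, hxA₀⟩
        have hfin0 : (T 0).Finite := hfin.subset (hTS 0)
        have := (Set.ncard_pos hfin0).mpr hne
        omega
      | succ k ih =>
        intro hk
        have hk' : k ≤ m := by omega
        have hss : T k ⊂ T (k + 1) :=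
          ssubset_of_subset_of_ne (hTmono (Nat.le_succ k)) (Ne.symm (hc k hk'))
        have := Set.ncard_lt_ncard hss (hfin.subset (hTS (k + 1)))
        have := ih (by omega)
        omega
    have h1 := hgrow (m + 1) le_rfl
    have h2 : (T (m + 1)).ncard ≤ m := hm ▸ Set.ncard_le_ncard (hTS (m + 1)) hfin
    omega
  obtain ⟨k, hkm, hstable⟩ := hstab
  -- y lies in the union of the stable family
  have hyU : y ∈ ⋃₀ T k := by
    by_contra hyU
    set U := ⋃₀ T k with hUdef
    set V := ⋃₀ (𝒮 \ T k) with hVdef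
    have hUc : IsClosed U := by
      rw [hUdef, sUnion_eq_biUnion]
      exact (hfin.subset (hTS k)).isClosed_biUnion (fun A hA => hcl A (hTS k hA))
    have hVc : IsClosed V := by
      rw [hVdef, sUnion_eq_biUnion]
      exact (hfin.subset diff_subset).isClosed_biUnion (fun A hA => hcl A hA.1)
    have hUV : ∀ z, z ∈ U → z ∈ V → False := by
      rintro z ⟨A, hA, hzA⟩ ⟨B, ⟨hBS, hBT⟩, hzB⟩
      have : B ∈ T (k + 1) := by
        rw [hTsucc]
        exact Or.inr ⟨hBS, A, hA, z, hzA, hzB⟩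
      rw [hstable] at this
      exact hBT this
    have hsub : t ⊆ Vᶜ ∪ Uᶜ := by
      intro z hz
      obtain ⟨A, hAS, hzA⟩ := hcover hz
      rcases Classical.em (A ∈ T k) with hAT | hAT
      · exact Or.inl (fun hzV => hUV z ⟨A, hAT, hzA⟩ hzV)
      · exact Or.inr (fun hzU => hUV z hzU ⟨A, ⟨hAS, hAT⟩, hzA⟩)
    have hxU : x ∈ U := ⟨A₀, hTmono (Nat.zero_le k) ⟨hA₀S, hxA₀⟩, hxA₀⟩
    have hxVc : x ∈ Vᶜ := fun hxV => hUV x hxU hxV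
    obtain ⟨z, hzt, hzVc, hzUc⟩ :=
      ht Vᶜ Uᶜ hVc.isOpen_compl hUc.isOpen_compl hsub ⟨x, hx, hxVc⟩ ⟨y, hy, hyU⟩
    obtain ⟨A, hAS, hzA⟩ := hcover hzt
    rcases Classical.em (A ∈ T k) with hAT | hAT
    · exact hzUc ⟨A, hAT, hzA⟩
    · exact hzVc ⟨A, ⟨hAS, hAT⟩, hzA⟩
  obtain ⟨B, hBT, hyB⟩ := hyU
  calc dist x y ≤ ((k : ℝ) + 1) * d' := hTdist k B hBT y hyB
    _ ≤ ((m : ℝ) + 1) * d' := by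
        apply mul_le_mul_of_nonneg_right _ hd'
        have : (k : ℝ) ≤ m := Nat.cast_le.mpr hkm
        linarith

/-- If `(#𝒜ₙ)·λⁿ → 0` then the attractor is totally disconnected. -/
theorem attractor_totallyDisconnected_of_card {X : Type*} [MetricSpace X] [CompactSpace X] [LocallyConnectedSpace X] {N : ℕ}
    (f : X → X) (P : Fin N → Set X) (lam : ℝ)
    (hN : 2 ≤ N)
    (hne : ∀ i, (P i).Nonempty)
    (hop : ∀ i, IsOpen (P i))
    (hdisj : ∀ i j, i ≠ j → Disjoint (P i) (P j))
    (hcov : (⋃ i, closure (P i)) = Set.univ)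
    (hlam0 : 0 < lam) (hlam1 : lam < 1)
    (hctr : ∀ i, ∀ x ∈ P i, ∀ y ∈ P i, dist (f x) (f y) ≤ lam * dist x y)
    (htilde : (tildeSet f P).Nonempty)
    (hcard : Filter.Tendsto (fun n : ℕ => ((atomFamily f P n).ncard : ℝ) * lam ^ n)
      Filter.atTop (nhds 0)) :
    IsTotallyDisconnected (Lam f P) := by
  intro t hts htc
  intro x hx y hy
  set D := Metric.diam (Set.univ : Set X) with hD
  have hD0 : 0 ≤ D := Metric.diam_nonneg
  -- key estimate for each generation n ≥ 1
  have key : ∀ n : ℕ, 1 ≤ n →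
      dist x y ≤ (((atomFamily f P n).ncard : ℝ) + 1) * (lam ^ n * D) := by
    intro n hn
    have hfin : (atomFamily f P n).Finite := by
      apply ((List.finite_length_eq (Fin N) n).image (atomOf f P)).subset
      rintro A ⟨l, hl, rfl⟩
      exact ⟨l, hl, rfl⟩
    have hcl : ∀ A ∈ atomFamily f P n, IsClosed A := by
      rintro A ⟨l, hl, rfl⟩
      exact isClosed_atomOf f P (by
        intro h
        rw [h] at hl
        simp at hl
        omega)
    have hbd : ∀ A ∈ atomFamily f P n, Bornology.IsBounded A :=
      fun A _ => isCompact_univ.isBounded.subset (subset_univ _)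
    have hdiam : ∀ A ∈ atomFamily f P n, Metric.diam A ≤ lam ^ n * D := by
      rintro A ⟨l, hl, rfl⟩
      have := diam_foldl_atomStep f P hlam0.le hctr l Set.univ
      rw [hl] at this
      exact this
    have hcover : t ⊆ ⋃₀ atomFamily f P n := by
      intro z hz
      have hzL : z ∈ Lam f P := hts hz
      have hzn : z ∈ LamN f P n := by
        rw [Lam] at hzL
        exact Set.mem_iInter₂.mp hzL n hn
      rw [LamN] at hzn
      simp only [Set.mem_iUnion, Set.mem_setOf_eq] at hzn
      obtain ⟨l, hl, hzl⟩ := hzn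
      exact ⟨atomOf f P l, ⟨l, hl, rfl⟩, hzl⟩
    exact dist_le_of_preconnected_cover (atomFamily f P n) hfin hcl hbd
      (mul_nonneg (pow_nonneg hlam0.le n) hD0) hdiam htc hcover hx hy
  -- the bound tends to zero
  have hlim : Tendsto (fun n : ℕ => (((atomFamily f P n).ncard : ℝ) + 1) * (lam ^ n * D))
      atTop (nhds 0) := by
    have h1 := hcard.mul_const D
    have h2 : Tendsto (fun n : ℕ => lam ^ n) atTop (nhds 0) :=
      tendsto_pow_atTop_nhds_zero_of_lt_one hlam0.le hlam1
    have h3 := h2.mul_const D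
    have h4 := h1.add h3
    simp only [zero_mul, add_zero] at h4
    refine h4.congr (fun n => ?_)
    ring
  have hle : dist x y ≤ 0 := by
    refine ge_of_tendsto hlim ?_
    filter_upwards [eventually_ge_atTop 1] with n hn using key n hn
  exact dist_le_zero.mp hle
end

section
/- Let X = [0,1]² and take λ ∈ (0,1). Let X₁ = {(x,y) ∈ X : y < x²}, X₂ = {(x,y) ∈ X : y > x²}, and let f equal f₁(x,y) = (λx, λy) on X₁ and f₂(x,y) = (1−λx, λy) on X₂. Then for every point (x,y) with x > 0, y > 0 whose forward orbit never hits the parabola {y = x²}, the ω-limit set of (x,y) equals the closure of {(λⁿ, 0) : n ∈ ℕ}, i.e. {(λⁿ,0) : n ∈ ℕ} ∪ {(0,0)}. -/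
open Filter

set_option maxHeartbeats 1000000 in
/-- Example on `[0,1]²` with pieces `X₁ = {y < x²}`, `X₂ = {y > x²}`,
`f₁(x,y) = (λx, λy)`, `f₂(x,y) = (1 − λx, λy)`: any point with positive coordinates
whose orbit never hits the parabola has ω-limit set equal to the closure of
`{(λⁿ, 0) : n ∈ ℕ}`. -/
theorem omega_limit_example13 (lam : ℝ) (hlam : lam ∈ Set.Ioo (0:ℝ) 1)
    (f : ℝ × ℝ → ℝ × ℝ)
    (h1 : ∀ p : ℝ × ℝ, p ∈ Set.Icc (0:ℝ) 1 ×ˢ Set.Icc (0:ℝ) 1 → p.2 < p.1 ^ 2 →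
      f p = (lam * p.1, lam * p.2))
    (h2 : ∀ p : ℝ × ℝ, p ∈ Set.Icc (0:ℝ) 1 ×ˢ Set.Icc (0:ℝ) 1 → p.1 ^ 2 < p.2 →
      f p = (1 - lam * p.1, lam * p.2))
    (p : ℝ × ℝ) (hp : p ∈ Set.Icc (0:ℝ) 1 ×ˢ Set.Icc (0:ℝ) 1)
    (hx : 0 < p.1) (hy : 0 < p.2)
    (horb : ∀ n : ℕ, (f^[n] p).2 ≠ ((f^[n] p).1) ^ 2) :
    {q : ℝ × ℝ | MapClusterPt q atTop fun n : ℕ => f^[n] p} =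
      closure {q : ℝ × ℝ | ∃ n : ℕ, q = ((lam ^ n : ℝ), (0:ℝ))} := by
  classical
  obtain ⟨hl0, hl1⟩ := hlam
  have hp1 : p.1 ∈ Set.Icc (0:ℝ) 1 := hp.1
  have hp2 : p.2 ∈ Set.Icc (0:ℝ) 1 := hp.2
  -- Basic invariant along the orbit
  have key : ∀ n : ℕ, 0 < (f^[n] p).1 ∧ (f^[n] p).1 ≤ 1 ∧ (f^[n] p).2 = lam ^ n * p.2 := by
    intro n
    induction n with
    | zero =>
      simp only [Function.iterate_zero_apply, pow_zero, one_mul]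
      exact ⟨hx, hp1.2, trivial⟩
    | succ n ih =>
      obtain ⟨hx0, hx1, hyv⟩ := ih
      have hpl : (0:ℝ) < lam ^ n := pow_pos hl0 n
      have hpl1 : lam ^ n ≤ 1 := pow_le_one₀ hl0.le hl1.le
      have hy0 : 0 < (f^[n] p).2 := by rw [hyv]; positivity
      have hy1 : (f^[n] p).2 ≤ 1 := by
        rw [hyv]; exact mul_le_one₀ hpl1 hp2.1 hp2.2
      have hmem : f^[n] p ∈ Set.Icc (0:ℝ) 1 ×ˢ Set.Icc (0:ℝ) 1 :=
        Set.mem_prod.mpr ⟨⟨hx0.le, hx1⟩, ⟨hy0.le, hy1⟩⟩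
      rw [Function.iterate_succ_apply']
      rcases lt_trichotomy ((f^[n] p).2) (((f^[n] p).1) ^ 2) with h | h | h
      · rw [h1 _ hmem h]
        dsimp only
        refine ⟨by positivity, mul_le_one₀ hl1.le hx0.le hx1, ?_⟩
        rw [hyv, pow_succ]; ring
      · exact absurd h (horb n)
      · rw [h2 _ hmem h]
        dsimp only
        have hll : lam * (f^[n] p).1 ≤ lam := mul_le_of_le_one_right hl0.le hx1
        have hll0 : 0 ≤ lam * (f^[n] p).1 := mul_nonneg hl0.le hx0.le
        refine ⟨by linarith, by linarith, ?_⟩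
        rw [hyv, pow_succ]; ring
  have hmemsq : ∀ n : ℕ, f^[n] p ∈ Set.Icc (0:ℝ) 1 ×ˢ Set.Icc (0:ℝ) 1 := by
    intro n
    obtain ⟨hx0, hx1, hyv⟩ := key n
    have hpl : (0:ℝ) < lam ^ n := pow_pos hl0 n
    have hpl1 : lam ^ n ≤ 1 := pow_le_one₀ hl0.le hl1.le
    refine Set.mem_prod.mpr ⟨⟨hx0.le, hx1⟩, ⟨?_, ?_⟩⟩ <;> rw [hyv]
    · positivity
    · exact mul_le_one₀ hpl1 hp2.1 hp2.2
  have hmono : ∀ N n : ℕ, N ≤ n → lam ^ n ≤ lam ^ N := fun N n h =>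
    pow_le_pow_of_le_one hl0.le hl1.le h
  have hpow : Tendsto (fun n : ℕ => lam ^ n) atTop (nhds 0) :=
    tendsto_pow_atTop_nhds_zero_of_lt_one hl0.le hl1
  have hev : ∀ c : ℝ, 0 < c → ∃ N, ∀ n, N ≤ n → lam ^ n < c := by
    intro c hc
    exact eventually_atTop.mp (hpow.eventually_lt_const hc)
  -- y-coordinate bound
  have hyb : ∀ m j : ℕ, m ≤ j → (f^[j] p).2 ≤ lam ^ m := by
    intro m j hj
    rw [(key j).2.2]
    calc lam ^ j * p.2 ≤ lam ^ j * 1 :=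
          mul_le_mul_of_nonneg_left hp2.2 (pow_pos hl0 j).le
      _ = lam ^ j := mul_one _
      _ ≤ lam ^ m := hmono m j hj
  -- Orbit formula during a run of X₁-steps following an X₂-step at time m
  have orbit1 : ∀ m k : ℕ, ((f^[m] p).1) ^ 2 < (f^[m] p).2 →
      (∀ j, m < j → j < m + 1 + k → (f^[j] p).2 < ((f^[j] p).1) ^ 2) →
      (f^[m + 1 + k] p).1 = lam ^ k * (1 - lam * (f^[m] p).1) := by
    intro m k hm hall
    induction k with
    | zero =>
      rw [show m + 1 + 0 = m + 1 from rfl, Function.iterate_succ_apply', h2 _ (hmemsq m) hm]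
      simp
    | succ k ih =>
      have hxe : (f^[m + 1 + k] p).1 = lam ^ k * (1 - lam * (f^[m] p).1) :=
        ih (fun j hj1 hj2 => hall j hj1 (by omega))
      have hcond := hall (m + 1 + k) (by omega) (by omega)
      rw [show m + 1 + (k + 1) = (m + 1 + k) + 1 by ring, Function.iterate_succ_apply',
        h1 _ (hmemsq _) hcond]
      dsimp only
      rw [hxe, pow_succ]
      ring
  -- There are infinitely many X₂-steps
  have hX2inf : ∀ N : ℕ, ∃ m : ℕ, N ≤ m ∧ ((f^[m] p).1) ^ 2 < (f^[m] p).2 := by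
    intro N
    by_contra hcon
    push_neg at hcon
    have hlt : ∀ m, N ≤ m → (f^[m] p).2 < ((f^[m] p).1) ^ 2 := fun m hm =>
      lt_of_le_of_ne (hcon m hm) (horb m)
    have hxf : ∀ j : ℕ, (f^[N + j] p).1 = lam ^ j * (f^[N] p).1 := by
      intro j
      induction j with
      | zero => simp
      | succ j ih =>
        rw [show N + (j + 1) = (N + j) + 1 by ring, Function.iterate_succ_apply',
          h1 _ (hmemsq _) (hlt _ (by omega))]
        dsimp only
        rw [ih, pow_succ]
        ring
    obtain ⟨M, hM⟩ := hev (lam ^ N * p.2) (by positivity)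
    have h := hlt (N + M) (by omega)
    rw [(key (N + M)).2.2, hxf M, pow_add] at h
    have hMlt := hM M le_rfl
    have hxN1 : (f^[N] p).1 ≤ 1 := (key N).2.1
    have hxN0 : 0 < (f^[N] p).1 := (key N).1
    have hplM : (0:ℝ) < lam ^ M := pow_pos hl0 M
    have e1 : lam ^ M * lam ^ M < lam ^ M * (lam ^ N * p.2) :=
      mul_lt_mul_of_pos_left hMlt hplM
    have e2 : (lam ^ M * (f^[N] p).1) ^ 2 ≤ lam ^ M * lam ^ M := by
      have hsq : ((f^[N] p).1) ^ 2 ≤ 1 := by nlinarith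
      nlinarith [sq_nonneg (lam ^ M)]
    nlinarith [h, e1, e2]
  -- Every (lam^k, 0) is a cluster point
  have hS : ∀ k : ℕ, MapClusterPt ((lam ^ k : ℝ), (0:ℝ)) atTop (fun n : ℕ => f^[n] p) := by
    intro k
    rw [mapClusterPt_iff_frequently]
    intro s hs
    rw [Metric.mem_nhds_iff] at hs
    obtain ⟨ε, hε, hball⟩ := hs
    rw [frequently_atTop]
    intro N
    have h1lam : (0:ℝ) < 1 - lam := by linarith
    set c : ℝ := min ((lam ^ k * (1 - lam)) ^ 2) (min (ε ^ 2) ε) with hcdef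
    have hc0 : 0 < c := by
      refine lt_min (pow_pos (mul_pos (pow_pos hl0 k) h1lam) 2) (lt_min (by positivity) hε)
    obtain ⟨M, hM⟩ := hev c hc0
    obtain ⟨m, hmM, hm⟩ := hX2inf (max N M)
    have hmM' : M ≤ m := le_trans (le_max_right _ _) hmM
    have hmN : N ≤ m := le_trans (le_max_left _ _) hmM
    have hlamm : lam ^ m < c := hM m hmM'
    have hxm0 : 0 < (f^[m] p).1 := (key m).1
    have hxm1 : (f^[m] p).1 ≤ 1 := (key m).2.1
    have hlxm : lam * (f^[m] p).1 ≤ lam := mul_le_of_le_one_right hl0.le hxm1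
    have hlxm0 : 0 < lam * (f^[m] p).1 := mul_pos hl0 hxm0
    have hX1 : ∀ i, i < k → (f^[m + 1 + i] p).2 < ((f^[m + 1 + i] p).1) ^ 2 := by
      intro i
      induction i using Nat.strong_induction_on with
      | _ i IH =>
        intro hik
        have hxe : (f^[m + 1 + i] p).1 = lam ^ i * (1 - lam * (f^[m] p).1) := by
          apply orbit1 m i hm
          intro j hj1 hj2
          obtain ⟨i', rfl⟩ : ∃ i', j = m + 1 + i' := ⟨j - (m + 1), by omega⟩
          exact IH i' (by omega) (by omega)
        rw [hxe]
        have e1 : (f^[m + 1 + i] p).2 ≤ lam ^ m := hyb m _ (by omega)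
        have e2 : lam ^ k ≤ lam ^ i := hmono i k hik.le
        have e3 : (1 - lam) ≤ 1 - lam * (f^[m] p).1 := by linarith
        have e4 : c ≤ (lam ^ k * (1 - lam)) ^ 2 := min_le_left _ _
        have e5 : lam ^ k * (1 - lam) ≤ lam ^ i * (1 - lam * (f^[m] p).1) :=
          mul_le_mul e2 e3 h1lam.le (pow_pos hl0 i).le
        have e6 : (lam ^ k * (1 - lam)) ^ 2 ≤ (lam ^ i * (1 - lam * (f^[m] p).1)) ^ 2 :=
          pow_le_pow_left₀ (mul_pos (pow_pos hl0 k) h1lam).le e5 2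
        linarith
    have hxn : (f^[m + 1 + k] p).1 = lam ^ k * (1 - lam * (f^[m] p).1) := by
      apply orbit1 m k hm
      intro j hj1 hj2
      obtain ⟨i', rfl⟩ : ∃ i', j = m + 1 + i' := ⟨j - (m + 1), by omega⟩
      exact hX1 i' (by omega)
    refine ⟨m + 1 + k, by omega, ?_⟩
    apply hball
    rw [Metric.mem_ball, Prod.dist_eq]
    have hcε2 : c ≤ ε ^ 2 := le_trans (min_le_right _ _) (min_le_left _ _)
    have hcε : c ≤ ε := le_trans (min_le_right _ _) (min_le_right _ _)
    have hxmsq : ((f^[m] p).1) ^ 2 < lam ^ m := lt_of_lt_of_le hm (hyb m m le_rfl)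
    have hxm_lt : (f^[m] p).1 < ε := by
      apply lt_of_pow_lt_pow_left₀ 2 hε.le
      calc ((f^[m] p).1) ^ 2 < lam ^ m := hxmsq
        _ < c := hlamm
        _ ≤ ε ^ 2 := hcε2
    have hpk0 : (0:ℝ) < lam ^ k := pow_pos hl0 k
    have hpk1 : lam ^ k ≤ 1 := pow_le_one₀ hl0.le hl1.le
    apply max_lt
    · rw [Real.dist_eq]
      have habs : |lam ^ k * (1 - lam * (f^[m] p).1) - lam ^ k| =
          lam ^ k * (lam * (f^[m] p).1) := by
        rw [abs_of_nonpos (by nlinarith [mul_pos hpk0 hlxm0])]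
        ring
      rw [hxn, habs]
      have f1 : (0:ℝ) ≤ (1 - lam ^ k) * (lam * (f^[m] p).1) :=
        mul_nonneg (by linarith) hlxm0.le
      have f2 : (0:ℝ) ≤ (1 - lam) * (f^[m] p).1 :=
        mul_nonneg (by linarith) hxm0.le
      nlinarith [f1, f2]
    · rw [Real.dist_eq, sub_zero, (key (m + 1 + k)).2.2, abs_of_nonneg (by positivity)]
      calc lam ^ (m + 1 + k) * p.2 ≤ lam ^ (m + 1 + k) * 1 :=
            mul_le_mul_of_nonneg_left hp2.2 (pow_pos hl0 _).le
        _ = lam ^ (m + 1 + k) := mul_one _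
        _ ≤ lam ^ m := hmono m _ (by omega)
        _ < c := hlamm
        _ ≤ ε := hcε
  -- Conclusion
  ext q
  simp only [Set.mem_setOf_eq]
  constructor
  · intro hq
    rw [Metric.mem_closure_iff]
    intro ε hε
    have hε3 : 0 < ε / 3 := by linarith
    obtain ⟨K, hK⟩ := hev (ε / 3) hε3
    obtain ⟨M₁, hM₁⟩ := hev ((ε / 3) ^ 2) (by positivity)
    obtain ⟨m₀, -, hm₀⟩ := hX2inf 0
    set N := max (max (m₀ + 1) (K + 1 + M₁)) K with hNdef
    have hfreq : ∃ᶠ n in atTop, (fun n : ℕ => f^[n] p) n ∈ Metric.ball q (ε / 3) :=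
      (mapClusterPt_iff_frequently.mp hq) _ (Metric.ball_mem_nhds q hε3)
    obtain ⟨n, hnN, hnq⟩ := frequently_atTop.mp hfreq N
    rw [Metric.mem_ball] at hnq
    have hnm₀ : m₀ + 1 ≤ n := le_trans (le_trans (le_max_left _ _) (le_max_left _ _)) hnN
    have hnKM : K + 1 + M₁ ≤ n := le_trans (le_trans (le_max_right _ _) (le_max_left _ _)) hnN
    have hnK : K ≤ n := le_trans (le_max_right _ _) hnN
    set P : ℕ → Prop := fun j => ((f^[j] p).1) ^ 2 < (f^[j] p).2 with hPdef
    set m := Nat.findGreatest P (n - 1) with hmdef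
    have hPm : P m := Nat.findGreatest_spec (P := P) (by omega) hm₀
    have hmle : m ≤ n - 1 := Nat.findGreatest_le _
    set k := n - 1 - m with hkdef
    have hnmk : n = m + 1 + k := by omega
    have hxn : (f^[n] p).1 = lam ^ k * (1 - lam * (f^[m] p).1) := by
      rw [hnmk]
      apply orbit1 m k hPm
      intro j hj1 hj2
      have hnotP : ¬ P j := Nat.findGreatest_is_greatest hj1 (by omega)
      rcases lt_trichotomy ((f^[j] p).2) (((f^[j] p).1) ^ 2) with h | h | h
      · exact h
      · exact absurd h (horb j)
      · exact absurd h hnotP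
    have hxm0 : 0 < (f^[m] p).1 := (key m).1
    have hxm1 : (f^[m] p).1 ≤ 1 := (key m).2.1
    have hlxm0 : 0 < lam * (f^[m] p).1 := mul_pos hl0 hxm0
    have hdist : dist (f^[n] p) ((lam ^ k : ℝ), (0:ℝ)) < ε / 3 := by
      rw [Prod.dist_eq]
      apply max_lt
      · rw [Real.dist_eq, hxn]
        have hpk0 : (0:ℝ) < lam ^ k := pow_pos hl0 k
        have hpk1 : lam ^ k ≤ 1 := pow_le_one₀ hl0.le hl1.le
        have habs : |lam ^ k * (1 - lam * (f^[m] p).1) - lam ^ k| =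
            lam ^ k * (lam * (f^[m] p).1) := by
          rw [abs_of_nonpos (by nlinarith [mul_pos hpk0 hlxm0])]
          ring
        rw [habs]
        rcases le_or_gt K k with h | h
        · have g1 : lam ^ k ≤ lam ^ K := hmono K k h
          have g2 : lam ^ K < ε / 3 := hK K le_rfl
          have g3 : lam ^ k * (lam * (f^[m] p).1) ≤ lam ^ k := by
            have : (0:ℝ) ≤ lam ^ k * (1 - lam * (f^[m] p).1) := by
              apply mul_nonneg hpk0.le
              nlinarith [mul_le_of_le_one_right hl0.le hxm1]
            nlinarith
          linarith
        · have hmge : M₁ ≤ m := by omega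
          have hxmsq : ((f^[m] p).1) ^ 2 < lam ^ m := lt_of_lt_of_le hPm (hyb m m le_rfl)
          have hxm_lt : (f^[m] p).1 < ε / 3 := by
            apply lt_of_pow_lt_pow_left₀ 2 hε3.le
            calc ((f^[m] p).1) ^ 2 < lam ^ m := hxmsq
              _ ≤ lam ^ M₁ := hmono M₁ m hmge
              _ < (ε / 3) ^ 2 := hM₁ M₁ le_rfl
          have f1 : (0:ℝ) ≤ (1 - lam ^ k) * (lam * (f^[m] p).1) :=
            mul_nonneg (by linarith) hlxm0.le
          have f2 : (0:ℝ) ≤ (1 - lam) * (f^[m] p).1 :=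
            mul_nonneg (by linarith) hxm0.le
          nlinarith [f1, f2]
      · rw [Real.dist_eq, sub_zero, (key n).2.2, abs_of_nonneg (by positivity)]
        calc lam ^ n * p.2 ≤ lam ^ n * 1 :=
              mul_le_mul_of_nonneg_left hp2.2 (pow_pos hl0 n).le
          _ = lam ^ n := mul_one _
          _ < ε / 3 := hK n hnK
    refine ⟨(lam ^ k, 0), ⟨k, rfl⟩, ?_⟩
    calc dist q ((lam ^ k : ℝ), (0:ℝ))
        ≤ dist q (f^[n] p) + dist (f^[n] p) ((lam ^ k : ℝ), (0:ℝ)) := dist_triangle _ _ _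
      _ < ε / 3 + ε / 3 := by
          rw [dist_comm]
          exact add_lt_add hnq hdist
      _ < ε := by linarith
  · intro hq
    have hclosed : IsClosed {q : ℝ × ℝ | MapClusterPt q atTop fun n : ℕ => f^[n] p} :=
      isClosed_setOf_clusterPt
    have hsub : {q : ℝ × ℝ | ∃ n : ℕ, q = ((lam ^ n : ℝ), (0:ℝ))} ⊆
        {q : ℝ × ℝ | MapClusterPt q atTop fun n : ℕ => f^[n] p} := by
      rintro _ ⟨k, rfl⟩
      exact hS k
    exact closure_minimal hsub hclosed hq
end

section
/- Let X = [0,1]², λ ∈ (0,1), X₁ = {(x,y) : y < x²}, X₂ = {(x,y) : y > x²}, and f given by f₁(x,y) = λ(x,y) on X₁ and f₂(x,y) = λ(x,y) + (0, 1−λ) on X₂. Then the limit set of f is L = {(0,0),(0,1)}, while the attractor is Λ = {(0, 1−λⁿ) : n ∈ ℕ} ∪ {(0,1)}. In particular Λ ∖ L is infinite, so the attractor strictly contains the limit set. -/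
open Filter
open Topology

noncomputable section

/-- The square `X = [0,1]²`. -/
def Xsq : Set (ℝ × ℝ) := Set.Icc (0:ℝ) 1 ×ˢ Set.Icc (0:ℝ) 1

/-- `X₁ = {(x,y) ∈ X : y < x²}`. -/
def piece1 : Set (ℝ × ℝ) := {p ∈ Xsq | p.2 < p.1 ^ 2}

/-- `X₂ = {(x,y) ∈ X : y > x²}`. -/
def piece2 : Set (ℝ × ℝ) := {p ∈ Xsq | p.1 ^ 2 < p.2}

/-- `X̃ = ⋂ₙ f⁻ⁿ(X ∖ Δ)`, with `X ∖ Δ = X₁ ∪ X₂`. -/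
def tildeSq (f : ℝ × ℝ → ℝ × ℝ) : Set (ℝ × ℝ) :=
  {p | ∀ n : ℕ, f^[n] p ∈ piece1 ∪ piece2}

/-- The ω-limit set of `p`. -/
def omegaSq (f : ℝ × ℝ → ℝ × ℝ) (p : ℝ × ℝ) : Set (ℝ × ℝ) :=
  {q | MapClusterPt q atTop fun n : ℕ => f^[n] p}

/-- The limit set `L`. -/
def limitSq (f : ℝ × ℝ → ℝ × ℝ) : Set (ℝ × ℝ) :=
  closure (⋃ p ∈ tildeSq f, omegaSq f p)

/-- The piece indexed by a Boolean symbol: `false ↦ X₁`, `true ↦ X₂`. -/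
def pieceB (b : Bool) : Set (ℝ × ℝ) := if b then piece2 else piece1

/-- The atom with itinerary `l`. -/
def atomSq (f : ℝ × ℝ → ℝ × ℝ) (l : List Bool) : Set (ℝ × ℝ) :=
  l.foldl (fun A b => closure (f '' (A ∩ pieceB b))) Xsq

/-- The attractor `Λ = ⋂_{n ≥ 1} ⋃ {atoms of generation n}`. -/
def LamSq (f : ℝ × ℝ → ℝ × ℝ) : Set (ℝ × ℝ) :=
  ⋂ n ∈ {n : ℕ | 1 ≤ n}, ⋃ l ∈ {l : List Bool | l.length = n}, atomSq f l

lemma mem_Xsq14 {p : ℝ × ℝ} :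
    p ∈ Xsq ↔ (0 ≤ p.1 ∧ p.1 ≤ 1) ∧ (0 ≤ p.2 ∧ p.2 ≤ 1) := by
  rw [Xsq, Set.mem_prod]
  simp [Set.mem_Icc]

lemma Xsq_closed14 : IsClosed Xsq := isClosed_Icc.prod isClosed_Icc

lemma pieceB_true14 : pieceB true = piece2 := rfl
lemma pieceB_false14 : pieceB false = piece1 := rfl

lemma piece1_sub14 : piece1 ⊆ Xsq := fun _ hp => hp.1
lemma piece2_sub14 : piece2 ⊆ Xsq := fun _ hp => hp.1

lemma pieceB_sub14 (b : Bool) : pieceB b ⊆ Xsq := by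
  cases b
  · exact piece1_sub14
  · exact piece2_sub14

section
variable {lam : ℝ} {f : ℝ × ℝ → ℝ × ℝ}

lemma piece2_step14 (hlam : lam ∈ Set.Ioo (0:ℝ) 1) {p : ℝ × ℝ} (hp : p ∈ piece2) :
    (lam * p.1, lam * p.2 + (1 - lam)) ∈ piece2 := by
  obtain ⟨hX, hlt⟩ := hp
  rw [mem_Xsq14] at hX
  obtain ⟨⟨hx0, hx1⟩, hy0, hy1⟩ := hX
  obtain ⟨hl0, hl1⟩ := hlam
  constructor
  · rw [mem_Xsq14]
    dsimp only
    refine ⟨⟨by positivity, by nlinarith⟩, by nlinarith, by nlinarith⟩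
  · show (lam * p.1, lam * p.2 + (1 - lam)).1 ^ 2 < (lam * p.1, lam * p.2 + (1 - lam)).2
    dsimp only
    nlinarith [mul_nonneg (mul_nonneg hl0.le (sub_nonneg.mpr hl1.le)) (sq_nonneg p.1),
      mul_lt_mul_of_pos_left hlt hl0]

lemma foldl_closed14 : ∀ (l : List Bool) (A : Set (ℝ × ℝ)), IsClosed A →
    IsClosed (l.foldl (fun A b => closure (f '' (A ∩ pieceB b))) A) := by
  intro l
  induction l with
  | nil => intro A hA; exact hA
  | cons b l ih => intro A _; exact ih _ isClosed_closure

lemma atom_closed14 (l : List Bool) : IsClosed (atomSq f l) :=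
  foldl_closed14 l Xsq Xsq_closed14

lemma foldl_sub_Xsq14 (hf : Set.MapsTo f Xsq Xsq) :
    ∀ (l : List Bool) (A : Set (ℝ × ℝ)), A ⊆ Xsq →
    l.foldl (fun A b => closure (f '' (A ∩ pieceB b))) A ⊆ Xsq := by
  intro l
  induction l with
  | nil => intro A hA; exact hA
  | cons b l ih =>
    intro A hA
    refine ih _ (closure_minimal ?_ Xsq_closed14)
    exact (Set.image_mono (f := f) (Set.inter_subset_left.trans hA)).trans hf.image_subset

lemma atom_sub_Xsq14 (hf : Set.MapsTo f Xsq Xsq) (l : List Bool) : atomSq f l ⊆ Xsq :=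
  foldl_sub_Xsq14 hf l Xsq (fun _ h => h)

lemma atom_append14 (l : List Bool) (b : Bool) :
    atomSq f (l ++ [b]) = closure (f '' (atomSq f l ∩ pieceB b)) := by
  simp [atomSq, List.foldl_append]

end

section
variable {lam : ℝ} {f : ℝ × ℝ → ℝ × ℝ}

lemma mem_foldl_true14 (hlam : lam ∈ Set.Ioo (0:ℝ) 1)
    (h2 : ∀ p ∈ piece2, f p = (lam * p.1, lam * p.2 + (1 - lam))) :
    ∀ (n : ℕ) (A : Set (ℝ × ℝ)) (p : ℝ × ℝ), p ∈ A → p ∈ piece2 →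
      ((lam ^ n * p.1, lam ^ n * p.2 + (1 - lam ^ n)) : ℝ × ℝ) ∈
        (List.replicate n true).foldl (fun A b => closure (f '' (A ∩ pieceB b))) A := by
  intro n
  induction n with
  | zero =>
    intro A p hpA _
    simpa using hpA
  | succ n ih =>
    intro A p hpA hp2
    rw [List.replicate_succ, List.foldl_cons, pieceB_true14]
    have hq2 : ((lam * p.1, lam * p.2 + (1 - lam)) : ℝ × ℝ) ∈ piece2 := piece2_step14 hlam hp2
    have hqA : ((lam * p.1, lam * p.2 + (1 - lam)) : ℝ × ℝ) ∈ closure (f '' (A ∩ piece2)) :=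
      subset_closure ⟨p, ⟨hpA, hp2⟩, h2 p hp2⟩
    have key := ih (closure (f '' (A ∩ piece2))) _ hqA hq2
    have e : ((lam ^ (n+1) * p.1, lam ^ (n+1) * p.2 + (1 - lam ^ (n+1))) : ℝ × ℝ)
        = (lam ^ n * (lam * p.1), lam ^ n * (lam * p.2 + (1 - lam)) + (1 - lam ^ n)) := by
      rw [Prod.mk.injEq]
      constructor <;> ring
    rw [e]
    exact key

lemma mem_foldl_false14 (hlam : lam ∈ Set.Ioo (0:ℝ) 1)
    (h1 : ∀ p ∈ piece1, f p = (lam * p.1, lam * p.2)) :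
    ∀ (n : ℕ) (A : Set (ℝ × ℝ)) (p : ℝ × ℝ), p ∈ A →
      (∀ j, j < n → ((lam ^ j * p.1, lam ^ j * p.2) : ℝ × ℝ) ∈ piece1) →
      ((lam ^ n * p.1, lam ^ n * p.2) : ℝ × ℝ) ∈
        (List.replicate n false).foldl (fun A b => closure (f '' (A ∩ pieceB b))) A := by
  intro n
  induction n with
  | zero =>
    intro A p hpA _
    simpa using hpA
  | succ n ih =>
    intro A p hpA hall
    rw [List.replicate_succ, List.foldl_cons, pieceB_false14]
    have hp1 : p ∈ piece1 := by simpa using hall 0 (Nat.succ_pos n)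
    have hqA : ((lam * p.1, lam * p.2) : ℝ × ℝ) ∈ closure (f '' (A ∩ piece1)) :=
      subset_closure ⟨p, ⟨hpA, hp1⟩, h1 p hp1⟩
    have hall' : ∀ j, j < n →
        ((lam ^ j * (lam * p.1), lam ^ j * (lam * p.2)) : ℝ × ℝ) ∈ piece1 := by
      intro j hj
      have e : ((lam ^ j * (lam * p.1), lam ^ j * (lam * p.2)) : ℝ × ℝ)
          = (lam ^ (j+1) * p.1, lam ^ (j+1) * p.2) := by
        rw [Prod.mk.injEq]; constructor <;> ring
      rw [e]
      exact hall (j+1) (by omega)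
    have key := ih (closure (f '' (A ∩ piece1))) _ hqA hall'
    have e : ((lam ^ (n+1) * p.1, lam ^ (n+1) * p.2) : ℝ × ℝ)
        = (lam ^ n * (lam * p.1), lam ^ n * (lam * p.2)) := by
      rw [Prod.mk.injEq]; constructor <;> ring
    rw [e]
    exact key

end

section
variable {lam : ℝ} {f : ℝ × ℝ → ℝ × ℝ}

lemma slice_false14 (hlam : lam ∈ Set.Ioo (0:ℝ) 1)
    (h1 : ∀ p ∈ piece1, f p = (lam * p.1, lam * p.2)) {A : Set (ℝ × ℝ)} {v : ℝ}
    (hv : (((0:ℝ), v) : ℝ × ℝ) ∈ closure (f '' (A ∩ piece1))) : v = 0 := by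
  obtain ⟨x, hxmem, hxlim⟩ := mem_closure_iff_seq_limit.mp hv
  choose p hp hfp using hxmem
  have e1 : ∀ n, (x n).1 = lam * (p n).1 := fun n => by rw [← hfp n, h1 _ (hp n).2]
  have e2 : ∀ n, (x n).2 = lam * (p n).2 := fun n => by rw [← hfp n, h1 _ (hp n).2]
  have hx1 : Tendsto (fun n => (x n).1) atTop (𝓝 0) :=
    (continuous_fst.tendsto (((0:ℝ), v) : ℝ × ℝ)).comp hxlim
  have hx2 : Tendsto (fun n => (x n).2) atTop (𝓝 v) :=
    (continuous_snd.tendsto (((0:ℝ), v) : ℝ × ℝ)).comp hxlim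
  have hg : Tendsto (fun n => lam * (p n).1) atTop (𝓝 0) := hx1.congr e1
  have hsq : Tendsto (fun n => lam * (p n).2) atTop (𝓝 0) := by
    apply squeeze_zero (t₀ := atTop) (f := fun n => lam * (p n).2) (g := fun n => lam * (p n).1)
    · intro n
      have hX := mem_Xsq14.mp (piece1_sub14 (hp n).2)
      exact mul_nonneg hlam.1.le hX.2.1
    · intro n
      have hX := mem_Xsq14.mp (piece1_sub14 (hp n).2)
      have hlt := (hp n).2.2
      nlinarith [mul_lt_mul_of_pos_left hlt hlam.1,
        mul_nonneg (mul_nonneg hlam.1.le hX.1.1) (sub_nonneg.mpr hX.1.2)]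
    · exact hg
  have := hx2.congr e2
  exact tendsto_nhds_unique this hsq

end

section
variable {lam : ℝ} {f : ℝ × ℝ → ℝ × ℝ}

lemma slice_true14 (hlam : lam ∈ Set.Ioo (0:ℝ) 1)
    (h2 : ∀ p ∈ piece2, f p = (lam * p.1, lam * p.2 + (1 - lam))) {A : Set (ℝ × ℝ)} {v : ℝ}
    (hv : (((0:ℝ), v) : ℝ × ℝ) ∈ closure (f '' (A ∩ piece2))) :
    ∃ w, (((0:ℝ), w) : ℝ × ℝ) ∈ closure A ∧ v = lam * w + (1 - lam) := by
  have hlne : lam ≠ 0 := ne_of_gt hlam.1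
  obtain ⟨x, hxmem, hxlim⟩ := mem_closure_iff_seq_limit.mp hv
  choose p hp hfp using hxmem
  have e1 : ∀ n, (x n).1 = lam * (p n).1 := fun n => by rw [← hfp n, h2 _ (hp n).2]
  have e2 : ∀ n, (x n).2 = lam * (p n).2 + (1 - lam) := fun n => by
    rw [← hfp n, h2 _ (hp n).2]
  have hx1 : Tendsto (fun n => (x n).1) atTop (𝓝 0) :=
    (continuous_fst.tendsto (((0:ℝ), v) : ℝ × ℝ)).comp hxlim
  have hx2 : Tendsto (fun n => (x n).2) atTop (𝓝 v) :=
    (continuous_snd.tendsto (((0:ℝ), v) : ℝ × ℝ)).comp hxlim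
  refine ⟨(v - (1 - lam)) / lam, ?_, by field_simp; ring⟩
  have hp1 : Tendsto (fun n => (p n).1) atTop (𝓝 0) := by
    have h' := (hx1.congr e1).const_mul lam⁻¹
    rw [mul_zero] at h'
    refine h'.congr fun n => ?_
    field_simp
  have hp2 : Tendsto (fun n => (p n).2) atTop (𝓝 ((v - (1 - lam)) / lam)) := by
    have h' := ((hx2.congr e2).sub_const (1 - lam)).mul_const lam⁻¹
    rw [div_eq_mul_inv]
    refine h'.congr fun n => ?_
    field_simp
    ring
  have hptend : Tendsto p atTop (𝓝 (((0:ℝ), (v - (1 - lam)) / lam) : ℝ × ℝ)) := by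
    have := hp1.prodMk_nhds hp2
    refine this.congr fun n => rfl
  exact mem_closure_of_tendsto hptend (Eventually.of_forall fun n => (hp n).1)

lemma atom_slice14 (hlam : lam ∈ Set.Ioo (0:ℝ) 1)
    (h1 : ∀ p ∈ piece1, f p = (lam * p.1, lam * p.2))
    (h2 : ∀ p ∈ piece2, f p = (lam * p.1, lam * p.2 + (1 - lam))) :
    ∀ (l : List Bool) (v : ℝ), (((0:ℝ), v) : ℝ × ℝ) ∈ atomSq f l →
      (∃ k, k < l.length ∧ v = 1 - lam ^ k) ∨
      (∃ w, 0 ≤ w ∧ w ≤ 1 ∧ v = 1 - lam ^ l.length * (1 - w)) := by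
  intro l
  induction l using List.reverseRecOn with
  | nil =>
    intro v hv
    right
    have := mem_Xsq14.mp hv
    exact ⟨v, this.2.1, this.2.2, by simp⟩
  | append_singleton l b ih =>
    intro v hv
    rw [atom_append14] at hv
    cases b with
    | false =>
      rw [pieceB_false14] at hv
      left
      refine ⟨0, by simp, ?_⟩
      rw [slice_false14 hlam h1 hv]
      simp
    | true =>
      rw [pieceB_true14] at hv
      obtain ⟨w, hwA, hvw⟩ := slice_true14 hlam h2 hv
      rw [(atom_closed14 l).closure_eq] at hwA
      rcases ih w hwA with ⟨k, hk, rfl⟩ | ⟨u, hu0, hu1, rfl⟩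
      · left
        refine ⟨k + 1, by simp; omega, by rw [hvw]; ring⟩
      · right
        refine ⟨u, hu0, hu1, ?_⟩
        rw [hvw, List.length_append]
        simp
        ring
end

section
variable {lam : ℝ} {f : ℝ × ℝ → ℝ × ℝ}

lemma foldl_x14 (hlam : lam ∈ Set.Ioo (0:ℝ) 1)
    (h1 : ∀ p ∈ piece1, f p = (lam * p.1, lam * p.2))
    (h2 : ∀ p ∈ piece2, f p = (lam * p.1, lam * p.2 + (1 - lam)))
    (hf : Set.MapsTo f Xsq Xsq) :
    ∀ (l : List Bool) (A : Set (ℝ × ℝ)) (r : ℝ), A ⊆ Xsq → (∀ p ∈ A, p.1 ≤ r) →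
      ∀ p ∈ l.foldl (fun A b => closure (f '' (A ∩ pieceB b))) A,
        p ∈ Xsq ∧ p.1 ≤ lam ^ l.length * r := by
  intro l
  induction l with
  | nil =>
    intro A r hA hr p hp
    simpa using ⟨hA hp, hr p hp⟩
  | cons b l ih =>
    intro A r hA hr p hp
    rw [List.foldl_cons] at hp
    have hC : closure (f '' (A ∩ pieceB b)) ⊆ Xsq ∩ {p : ℝ × ℝ | p.1 ≤ lam * r} := by
      apply closure_minimal
      · rintro q ⟨a, ⟨haA, hab⟩, rfl⟩
        have haX : a ∈ Xsq := hA haA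
        have har : a.1 ≤ r := hr a haA
        constructor
        · exact hf haX
        · cases b with
          | false =>
            rw [h1 a hab]
            exact mul_le_mul_of_nonneg_left har hlam.1.le
          | true =>
            rw [h2 a hab]
            exact mul_le_mul_of_nonneg_left har hlam.1.le
      · exact Xsq_closed14.inter (isClosed_le continuous_fst continuous_const)
    have := ih (closure (f '' (A ∩ pieceB b))) (lam * r)
      (hC.trans Set.inter_subset_left) (fun q hq => (hC hq).2) p hp
    refine ⟨this.1, ?_⟩
    calc p.1 ≤ lam ^ l.length * (lam * r) := this.2
    _ = lam ^ (b :: l).length * r := by rw [List.length_cons, pow_succ]; ring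

lemma mem_Lam_iff14 {q : ℝ × ℝ} :
    q ∈ LamSq f ↔ ∀ n : ℕ, 1 ≤ n → ∃ l : List Bool, l.length = n ∧ q ∈ atomSq f l := by
  simp [LamSq]

lemma Lam_sub14 (hlam : lam ∈ Set.Ioo (0:ℝ) 1)
    (h1 : ∀ p ∈ piece1, f p = (lam * p.1, lam * p.2))
    (h2 : ∀ p ∈ piece2, f p = (lam * p.1, lam * p.2 + (1 - lam)))
    (hf : Set.MapsTo f Xsq Xsq) :
    LamSq f ⊆ {q : ℝ × ℝ | ∃ n : ℕ, q = ((0:ℝ), 1 - lam ^ n)} ∪ {((0:ℝ), (1:ℝ))} := by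
  intro q hq
  rw [mem_Lam_iff14] at hq
  -- q ∈ Xsq and q.1 = 0
  have hbound : ∀ n : ℕ, q ∈ Xsq ∧ q.1 ≤ lam ^ (n + 1) := by
    intro n
    obtain ⟨l, hlen, hmem⟩ := hq (n + 1) (by omega)
    have := foldl_x14 hlam h1 h2 hf l Xsq 1 (fun _ h => h)
      (fun p hp => (mem_Xsq14.mp hp).1.2) q hmem
    rw [hlen, mul_one] at this
    exact this
  have hqX : q ∈ Xsq := (hbound 0).1
  have hx0 : q.1 = 0 := by
    have htend : Tendsto (fun n : ℕ => lam ^ (n + 1)) atTop (𝓝 0) :=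
      (tendsto_add_atTop_iff_nat 1).mpr
        (tendsto_pow_atTop_nhds_zero_of_lt_one hlam.1.le hlam.2)
    exact le_antisymm (ge_of_tendsto' htend fun n => (hbound n).2) (mem_Xsq14.mp hqX).1.1
  have hqpair : q = (((0:ℝ), q.2) : ℝ × ℝ) := by
    rw [← hx0]
  by_contra hcon
  rw [Set.mem_union] at hcon
  push_neg at hcon
  obtain ⟨hnotn, hnot1⟩ := hcon
  simp only [Set.mem_setOf_eq, not_exists] at hnotn
  have hv1 : q.2 < 1 := by
    rcases lt_or_eq_of_le (mem_Xsq14.mp hqX).2.2 with h | h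
    · exact h
    · exact absurd (by rw [hqpair, h] : q = (((0:ℝ),(1:ℝ)) : ℝ × ℝ)) hnot1
  obtain ⟨N, hN⟩ := exists_pow_lt_of_lt_one (by linarith : (0:ℝ) < 1 - q.2) hlam.2
  obtain ⟨l, hlen, hmem⟩ := hq (N + 1) (by omega)
  rw [hqpair] at hmem
  rcases atom_slice14 hlam h1 h2 l q.2 hmem with ⟨k, _, hk⟩ | ⟨w, _, hw1, hw⟩
  · exact hnotn k (by rw [hqpair, hk])
  · rw [hlen] at hw
    have hpow : lam ^ (N + 1) ≤ lam ^ N :=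
      pow_le_pow_of_le_one hlam.1.le hlam.2.le (by omega)
    have hpos : 0 < lam ^ (N + 1) := pow_pos hlam.1 _
    nlinarith
end

section
variable {lam : ℝ} {f : ℝ × ℝ → ℝ × ℝ}

lemma atom_append_gen14 (l₁ l₂ : List Bool) :
    atomSq f (l₁ ++ l₂) = l₂.foldl (fun A b => closure (f '' (A ∩ pieceB b))) (atomSq f l₁) := by
  simp [atomSq, List.foldl_append]

set_option maxHeartbeats 1000000 in
lemma Lam_sup14 (hlam : lam ∈ Set.Ioo (0:ℝ) 1)
    (h1 : ∀ p ∈ piece1, f p = (lam * p.1, lam * p.2))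
    (h2 : ∀ p ∈ piece2, f p = (lam * p.1, lam * p.2 + (1 - lam))) :
    ({q : ℝ × ℝ | ∃ n : ℕ, q = ((0:ℝ), 1 - lam ^ n)} ∪ {((0:ℝ), (1:ℝ))}) ⊆ LamSq f := by
  have hl0 := hlam.1
  have hl1 := hlam.2
  have h0 : Tendsto (fun j : ℕ => (1:ℝ)/(j+1)) atTop (𝓝 0) :=
    tendsto_one_div_add_atTop_nhds_zero_nat
  have hone : ∀ m : ℕ, (((0:ℝ), (1:ℝ)) : ℝ × ℝ) ∈ atomSq f (List.replicate m true) := by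
    intro m
    have hX : (((0:ℝ), (1:ℝ)) : ℝ × ℝ) ∈ Xsq := by rw [mem_Xsq14]; norm_num
    have hp2 : (((0:ℝ), (1:ℝ)) : ℝ × ℝ) ∈ piece2 := ⟨hX, by norm_num⟩
    have := mem_foldl_true14 hlam h2 m Xsq _ hX hp2
    have e : ((lam ^ m * ((0:ℝ),(1:ℝ)).1, lam ^ m * ((0:ℝ),(1:ℝ)).2 + (1 - lam ^ m)) : ℝ × ℝ)
        = (((0:ℝ), (1:ℝ)) : ℝ × ℝ) := by
      rw [Prod.mk.injEq]; constructor <;> · dsimp only; ring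
    rw [← e]
    exact this
  intro q hq
  rw [mem_Lam_iff14]
  intro m hm
  rcases hq with ⟨n, rfl⟩ | hq
  · -- q = (0, 1 - lam ^ n)
    by_cases hmn : m ≤ n
    · refine ⟨List.replicate m true, by simp, ?_⟩
      set c := lam ^ (n - m) with hc
      have hc0 : 0 < c := pow_pos hl0 _
      have hc1 : c ≤ 1 := pow_le_one₀ hl0.le hl1.le
      have hmem : ∀ j : ℕ,
          ((lam ^ m * 0, lam ^ m * ((1 - c) + c * (1/(j+1))) + (1 - lam ^ m)) : ℝ × ℝ) ∈
            atomSq f (List.replicate m true) := by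
        intro j
        have ht0 : (0:ℝ) < 1/(j+1) := by positivity
        have ht1 : (1:ℝ)/(j+1) ≤ 1 := by
          rw [div_le_one (by positivity)]
          exact le_add_of_nonneg_left (Nat.cast_nonneg j)
        have hX : (((0:ℝ), (1 - c) + c * (1/(j+1))) : ℝ × ℝ) ∈ Xsq := by
          rw [mem_Xsq14]; dsimp only
          refine ⟨⟨le_refl 0, by norm_num⟩, by nlinarith, by nlinarith⟩
        have hp2 : (((0:ℝ), (1 - c) + c * (1/(j+1))) : ℝ × ℝ) ∈ piece2 :=
          ⟨hX, by dsimp only; nlinarith⟩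
        exact mem_foldl_true14 hlam h2 m Xsq _ hX hp2
      have hmc : lam ^ m * c = lam ^ n := by
        rw [hc, ← pow_add]; congr 1; omega
      have hy : Tendsto (fun j : ℕ => lam ^ m * ((1 - c) + c * (1/(j+1))) + (1 - lam ^ m))
          atTop (𝓝 (1 - lam ^ n)) := by
        have h' := (((h0.const_mul c).const_add (1 - c)).const_mul (lam ^ m)).add_const
          (1 - lam ^ m)
        rw [show lam ^ m * ((1 - c) + c * 0) + (1 - lam ^ m) = 1 - lam ^ n from by
          rw [← hmc]; ring] at h'
        exact h'
      have hx : Tendsto (fun _ : ℕ => lam ^ m * (0:ℝ)) atTop (𝓝 0) := by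
        simpa using (tendsto_const_nhds : Tendsto (fun _ : ℕ => lam ^ m * (0:ℝ)) atTop _)
      exact (atom_closed14 _).mem_of_tendsto (hx.prodMk_nhds hy) (Eventually.of_forall hmem)
    · push_neg at hmn
      obtain ⟨K, hK⟩ : ∃ K, m - n = K + 1 := ⟨m - n - 1, by omega⟩
      refine ⟨List.replicate (K+1) false ++ List.replicate n true, by simp; omega, ?_⟩
      set c := lam ^ K * ((lam + 1)/2) with hc
      have hpK : 0 < lam ^ K := pow_pos hl0 K
      have hpK1 : lam ^ K ≤ 1 := pow_le_one₀ hl0.le hl1.le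
      have hc0 : 0 < c := mul_pos hpK (by linarith)
      have hc1 : c < lam ^ K := by nlinarith
      have hck : lam ^ (K+1) < c := by rw [pow_succ]; rw [hc]; nlinarith
      have hmem : ∀ j : ℕ,
          ((lam ^ n * (lam ^ (K+1) * (1/(j+1))),
            lam ^ n * (lam ^ (K+1) * (c * (1/(j+1))^2)) + (1 - lam ^ n)) : ℝ × ℝ) ∈
            atomSq f (List.replicate (K+1) false ++ List.replicate n true) := by
        intro j
        have ht0 : (0:ℝ) < 1/(j+1) := by positivity
        have ht1 : (1:ℝ)/(j+1) ≤ 1 := by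
          rw [div_le_one (by positivity)]
          exact le_add_of_nonneg_left (Nat.cast_nonneg j)
        set t := (1:ℝ)/(j+1) with htdef
        have ht2 : t^2 ≤ 1 := by nlinarith
        have hcle1 : c ≤ 1 := hc1.le.trans hpK1
        have hct2 : c * t^2 ≤ 1 := by nlinarith
        have hbase : ((t, c * t^2) : ℝ × ℝ) ∈ Xsq := by
          rw [mem_Xsq14]; dsimp only
          exact ⟨⟨ht0.le, ht1⟩, by positivity, by nlinarith⟩
        have hsteps : ∀ j', j' < K + 1 →
            ((lam ^ j' * (t, c * t^2).1, lam ^ j' * (t, c * t^2).2) : ℝ × ℝ) ∈ piece1 := by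
          intro j' hj'
          have hpj : 0 < lam ^ j' := pow_pos hl0 j'
          have hpj1 : lam ^ j' ≤ 1 := pow_le_one₀ hl0.le hl1.le
          have hKj : lam ^ K ≤ lam ^ j' := pow_le_pow_of_le_one hl0.le hl1.le (by omega)
          have hcj : c < lam ^ j' := lt_of_lt_of_le hc1 hKj
          refine ⟨?_, ?_⟩
          · rw [mem_Xsq14]; dsimp only
            refine ⟨⟨by positivity, by nlinarith⟩, by positivity, by nlinarith [mul_nonneg hc0.le (pow_pos ht0 2).le]⟩
          · show lam ^ j' * (t, c * t^2).2 < (lam ^ j' * (t, c * t^2).1) ^ 2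
            dsimp only
            nlinarith [mul_lt_mul_of_pos_right hcj (mul_pos hpj (pow_pos ht0 2))]
        have hPatom := mem_foldl_false14 hlam h1 (K+1) Xsq ((t, c * t^2) : ℝ × ℝ)
          hbase hsteps
        have hP2 : ((lam ^ (K+1) * (t, c * t^2).1, lam ^ (K+1) * (t, c * t^2).2) : ℝ × ℝ)
            ∈ piece2 := by
          have hpk : 0 < lam ^ (K+1) := pow_pos hl0 _
          have hpk1 : lam ^ (K+1) ≤ 1 := pow_le_one₀ hl0.le hl1.le
          refine ⟨?_, ?_⟩
          · rw [mem_Xsq14]; dsimp only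
            refine ⟨⟨by positivity, by nlinarith⟩, by positivity, by nlinarith [mul_nonneg hc0.le (pow_pos ht0 2).le]⟩
          · show (lam ^ (K+1) * (t, c * t^2).1) ^ 2 < lam ^ (K+1) * (t, c * t^2).2
            dsimp only
            nlinarith [mul_lt_mul_of_pos_right hck (mul_pos (pow_pos hl0 (K+1)) (pow_pos ht0 2))]
        have htrue := mem_foldl_true14 hlam h2 n (atomSq f (List.replicate (K+1) false)) _
          hPatom hP2
        rw [atom_append_gen14]
        exact htrue
      have hy : Tendsto
          (fun j : ℕ => lam ^ n * (lam ^ (K+1) * (c * (1/(j+1))^2)) + (1 - lam ^ n))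
          atTop (𝓝 (1 - lam ^ n)) := by
        have hsq : Tendsto (fun j : ℕ => ((1:ℝ)/(j+1))^2) atTop (𝓝 0) := by
          simpa using h0.pow 2
        have h' := (((hsq.const_mul c).const_mul (lam ^ (K+1))).const_mul (lam ^ n)).add_const
          (1 - lam ^ n)
        rw [show lam ^ n * (lam ^ (K+1) * (c * 0)) + (1 - lam ^ n) = 1 - lam ^ n from by
          ring] at h'
        exact h'
      have hx : Tendsto (fun j : ℕ => lam ^ n * (lam ^ (K+1) * (1/(j+1)))) atTop (𝓝 0) := by
        have h' := (h0.const_mul (lam ^ (K+1))).const_mul (lam ^ n)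
        simpa using h'
      exact (atom_closed14 _).mem_of_tendsto (hx.prodMk_nhds hy) (Eventually.of_forall hmem)
  · rw [Set.mem_singleton_iff] at hq
    subst hq
    exact ⟨List.replicate m true, by simp, hone m⟩
end

section
variable {lam : ℝ} {f : ℝ × ℝ → ℝ × ℝ}

lemma clusterPt_eq14 {u : ℕ → ℝ × ℝ} {q a : ℝ × ℝ}
    (hq : MapClusterPt q atTop u) (hu : Tendsto u atTop (𝓝 a)) : q = a := by
  have h' : (𝓝 q ⊓ map u atTop).NeBot := hq
  exact eq_of_nhds_neBot (h'.mono (inf_le_inf_left _ hu))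

lemma omega_sub14 (hlam : lam ∈ Set.Ioo (0:ℝ) 1)
    (h1 : ∀ p ∈ piece1, f p = (lam * p.1, lam * p.2))
    (h2 : ∀ p ∈ piece2, f p = (lam * p.1, lam * p.2 + (1 - lam))) :
    ∀ p ∈ tildeSq f, omegaSq f p ⊆ {(((0:ℝ),(0:ℝ)) : ℝ × ℝ), ((0:ℝ),(1:ℝ))} := by
  intro p hp q hq
  have hpow : Tendsto (fun n : ℕ => lam ^ n) atTop (𝓝 0) :=
    tendsto_pow_atTop_nhds_zero_of_lt_one hlam.1.le hlam.2
  by_cases hall : ∀ n, f^[n] p ∈ piece1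
  · have hform : ∀ n : ℕ, f^[n] p = ((lam ^ n * p.1, lam ^ n * p.2) : ℝ × ℝ) := by
      intro n
      induction n with
      | zero => simp
      | succ n ih =>
        have hmem := hall n
        rw [ih] at hmem
        rw [Function.iterate_succ_apply', ih, h1 _ hmem]
        rw [Prod.mk.injEq]
        constructor <;> · dsimp only; ring
    have htend : Tendsto (fun n : ℕ => f^[n] p) atTop (𝓝 (((0:ℝ),(0:ℝ)) : ℝ × ℝ)) := by
      have hA : Tendsto (fun n : ℕ => lam ^ n * p.1) atTop (𝓝 0) := by
        simpa using hpow.mul_const p.1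
      have hB : Tendsto (fun n : ℕ => lam ^ n * p.2) atTop (𝓝 0) := by
        simpa using hpow.mul_const p.2
      exact (hA.prodMk_nhds hB).congr fun n => (hform n).symm
    left
    exact clusterPt_eq14 hq htend
  · push_neg at hall
    obtain ⟨N, hN⟩ := hall
    have hN2 : f^[N] p ∈ piece2 := (hp N).resolve_left hN
    have hstep : ∀ k : ℕ, f^[k + N] p ∈ piece2 ∧
        f^[k + N] p = ((lam ^ k * (f^[N] p).1,
          lam ^ k * (f^[N] p).2 + (1 - lam ^ k)) : ℝ × ℝ) := by
      intro k
      induction k with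
      | zero =>
        refine ⟨by simpa using hN2, ?_⟩
        simp
      | succ k ih =>
        have e : k + 1 + N = (k + N) + 1 := by omega
        rw [e, Function.iterate_succ_apply', h2 _ ih.1]
        constructor
        · exact piece2_step14 hlam ih.1
        · rw [ih.2, Prod.mk.injEq]
          constructor <;> · dsimp only; ring
    have htend : Tendsto (fun n : ℕ => f^[n] p) atTop (𝓝 (((0:ℝ),(1:ℝ)) : ℝ × ℝ)) := by
      have hA : Tendsto (fun k : ℕ => lam ^ k * (f^[N] p).1) atTop (𝓝 0) := by
        simpa using hpow.mul_const (f^[N] p).1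
      have hB : Tendsto (fun k : ℕ => lam ^ k * (f^[N] p).2 + (1 - lam ^ k)) atTop (𝓝 1) := by
        have := (hpow.mul_const (f^[N] p).2).add
          ((tendsto_const_nhds (x := (1:ℝ))).sub hpow)
        simpa using this
      have h' : Tendsto (fun k : ℕ => f^[k + N] p) atTop (𝓝 (((0:ℝ),(1:ℝ)) : ℝ × ℝ)) :=
        (hA.prodMk_nhds hB).congr fun k => ((hstep k).2).symm
      exact (tendsto_add_atTop_iff_nat N).mp h'
    right
    exact clusterPt_eq14 hq htend

lemma limit_eq14 (hlam : lam ∈ Set.Ioo (0:ℝ) 1)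
    (h1 : ∀ p ∈ piece1, f p = (lam * p.1, lam * p.2))
    (h2 : ∀ p ∈ piece2, f p = (lam * p.1, lam * p.2 + (1 - lam))) :
    limitSq f = {(((0:ℝ),(0:ℝ)) : ℝ × ℝ), ((0:ℝ),(1:ℝ))} := by
  have hpow : Tendsto (fun n : ℕ => lam ^ n) atTop (𝓝 0) :=
    tendsto_pow_atTop_nhds_zero_of_lt_one hlam.1.le hlam.2
  have hS : (⋃ p ∈ tildeSq f, omegaSq f p) = {(((0:ℝ),(0:ℝ)) : ℝ × ℝ), ((0:ℝ),(1:ℝ))} := by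
    apply Set.Subset.antisymm
    · intro q hq
      simp only [Set.mem_iUnion] at hq
      obtain ⟨p, hp, hq⟩ := hq
      exact omega_sub14 hlam h1 h2 p hp hq
    · have hmem1 : ∀ n : ℕ, ((lam ^ n, (0:ℝ)) : ℝ × ℝ) ∈ piece1 := by
        intro n
        have h0 : 0 < lam ^ n := pow_pos hlam.1 n
        have h1' : lam ^ n ≤ 1 := pow_le_one₀ hlam.1.le hlam.2.le
        refine ⟨mem_Xsq14.mpr ⟨⟨by positivity, by exact h1'⟩, by norm_num, by norm_num⟩, ?_⟩
        show (0:ℝ) < (lam ^ n) ^ 2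
        positivity
      have hform1 : ∀ n : ℕ, f^[n] (((1:ℝ),(0:ℝ)) : ℝ × ℝ) = ((lam ^ n, (0:ℝ)) : ℝ × ℝ) := by
        intro n
        induction n with
        | zero => norm_num
        | succ n ih =>
          rw [Function.iterate_succ_apply', ih, h1 _ (hmem1 n), Prod.mk.injEq]
          constructor <;> · dsimp only; ring
      have hmem2 : (((0:ℝ),(1:ℝ)) : ℝ × ℝ) ∈ piece2 := by
        refine ⟨mem_Xsq14.mpr (by norm_num), ?_⟩
        show ((0:ℝ)) ^ 2 < 1
        norm_num
      have hform2 : ∀ n : ℕ, f^[n] (((0:ℝ),(1:ℝ)) : ℝ × ℝ) = (((0:ℝ),(1:ℝ)) : ℝ × ℝ) := by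
        intro n
        induction n with
        | zero => rfl
        | succ n ih =>
          rw [Function.iterate_succ_apply', ih, h2 _ hmem2, Prod.mk.injEq]
          constructor <;> · dsimp only; ring
      rintro q (rfl | rfl)
      · have htilde : (((1:ℝ),(0:ℝ)) : ℝ × ℝ) ∈ tildeSq f := by
          intro n
          left
          rw [hform1 n]
          exact hmem1 n
        have homega : (((0:ℝ),(0:ℝ)) : ℝ × ℝ) ∈ omegaSq f (((1:ℝ),(0:ℝ)) : ℝ × ℝ) := by
          apply Tendsto.mapClusterPt
          have : Tendsto (fun n : ℕ => ((lam ^ n, (0:ℝ)) : ℝ × ℝ)) atTop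
              (𝓝 (((0:ℝ),(0:ℝ)) : ℝ × ℝ)) := hpow.prodMk_nhds tendsto_const_nhds
          exact this.congr fun n => (hform1 n).symm
        exact Set.mem_biUnion htilde homega
      · have htilde : (((0:ℝ),(1:ℝ)) : ℝ × ℝ) ∈ tildeSq f := by
          intro n
          right
          rw [hform2 n]
          exact hmem2
        have homega : (((0:ℝ),(1:ℝ)) : ℝ × ℝ) ∈ omegaSq f (((0:ℝ),(1:ℝ)) : ℝ × ℝ) := by
          apply Tendsto.mapClusterPt
          have : Tendsto (fun n : ℕ => (((0:ℝ),(1:ℝ)) : ℝ × ℝ)) atTop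
              (𝓝 (((0:ℝ),(1:ℝ)) : ℝ × ℝ)) := tendsto_const_nhds
          exact this.congr fun n => (hform2 n).symm
        exact Set.mem_biUnion htilde homega
  rw [limitSq, hS]
  exact ((Set.finite_singleton _).insert _).isClosed.closure_eq
end

/-- With `f₁(x,y) = λ(x,y)` on `X₁` and `f₂(x,y) = λ(x,y) + (0, 1−λ)` on `X₂`:
the limit set is `{(0,0),(0,1)}`, the attractor is `{(0, 1−λⁿ) : n ∈ ℕ} ∪ {(0,1)}`,
and `Λ ∖ L` is infinite. -/
theorem example14 (lam : ℝ) (hlam : lam ∈ Set.Ioo (0:ℝ) 1)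
    (f : ℝ × ℝ → ℝ × ℝ)
    (h1 : ∀ p ∈ piece1, f p = (lam * p.1, lam * p.2))
    (h2 : ∀ p ∈ piece2, f p = (lam * p.1, lam * p.2 + (1 - lam)))
    (hf : Set.MapsTo f Xsq Xsq) :
    limitSq f = {((0:ℝ), (0:ℝ)), ((0:ℝ), (1:ℝ))} ∧
    LamSq f = {q : ℝ × ℝ | ∃ n : ℕ, q = ((0:ℝ), 1 - lam ^ n)} ∪ {((0:ℝ), (1:ℝ))} ∧
    (LamSq f \ limitSq f).Infinite := by
  have hL := limit_eq14 hlam h1 h2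
  have hLam := Set.Subset.antisymm (Lam_sub14 hlam h1 h2 hf) (Lam_sup14 hlam h1 h2)
  refine ⟨hL, hLam, ?_⟩
  rw [hL, hLam]
  apply Set.infinite_of_injective_forall_mem
    (f := fun n : ℕ => (((0:ℝ), 1 - lam ^ (n+1)) : ℝ × ℝ))
  · intro a b hab
    rw [Prod.mk.injEq] at hab
    have hab' : lam ^ (a+1) = lam ^ (b+1) := by linarith [hab.2]
    have hsa : StrictAnti (fun n : ℕ => lam ^ n) := fun i j hij =>
      pow_lt_pow_right_of_lt_one₀ hlam.1 hlam.2 hij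
    have := hsa.injective hab'
    omega
  · intro n
    have hpos : 0 < lam ^ (n+1) := pow_pos hlam.1 _
    have hlt1 : lam ^ (n+1) < 1 := pow_lt_one₀ hlam.1.le hlam.2 (by omega)
    constructor
    · left
      exact ⟨n+1, rfl⟩
    · simp only [Set.mem_insert_iff, Set.mem_singleton_iff, Prod.mk.injEq, not_or]
      constructor
      · rintro ⟨-, h⟩
        nlinarith
      · rintro ⟨-, h⟩
        nlinarith
end
end

section
/- In the setting X = [0,1]², f₁(x,y) = λ(x,y) on X₁ = {y < x²} and f₂(x,y) = λ(x,y)+(0,1−λ) on X₂ = {y > x²}, the only admissible itineraries of atoms are of the form (1,1,…,1), (2,2,…,2), or (1,…,1,2,…,2) (a block of 1's followed by a block of 2's). Consequently the attractor equals {(0,0)} ∪ {(0, 1−λᵏ) : k ≥ 1} ∪ {(0,1)}. -/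
open Filter

noncomputable section

namespace Ex15

def atomFrom (f : ℝ × ℝ → ℝ × ℝ) (A : Set (ℝ × ℝ)) (l : List Bool) : Set (ℝ × ℝ) :=
  l.foldl (fun A b => closure (f '' (A ∩ pieceB b))) A

lemma atomFrom_append (f : ℝ × ℝ → ℝ × ℝ) (A : Set (ℝ × ℝ)) (l1 l2 : List Bool) :
    atomFrom f A (l1 ++ l2) = atomFrom f (atomFrom f A l1) l2 :=
  List.foldl_append

lemma atomFrom_empty (f : ℝ × ℝ → ℝ × ℝ) (l : List Bool) : atomFrom f ∅ l = ∅ := by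
  induction l with
  | nil => rfl
  | cons b l ih => simpa [atomFrom, List.foldl_cons] using ih

section geom

variable {lam : ℝ} {f : ℝ × ℝ → ℝ × ℝ} {A : Set (ℝ × ℝ)}

lemma mem_Xsq {p : ℝ × ℝ} : p ∈ Xsq ↔ (0 ≤ p.1 ∧ p.1 ≤ 1) ∧ 0 ≤ p.2 ∧ p.2 ≤ 1 := by
  constructor
  · rintro ⟨h1, h2⟩
    exact ⟨⟨h1.1, h1.2⟩, h2.1, h2.2⟩
  · rintro ⟨⟨a, b⟩, c, d⟩
    exact ⟨⟨a, b⟩, ⟨c, d⟩⟩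

lemma mem_piece2 {p : ℝ × ℝ} : p ∈ piece2 ↔ p ∈ Xsq ∧ p.1 ^ 2 < p.2 := Iff.rfl

lemma mem_piece1 {p : ℝ × ℝ} : p ∈ piece1 ↔ p ∈ Xsq ∧ p.2 < p.1 ^ 2 := Iff.rfl

lemma g_maps_piece2 (hl0 : 0 < lam) (hl1 : lam < 1) {p : ℝ × ℝ} (hp : p ∈ piece2) :
    (lam * p.1, lam * p.2 + (1 - lam)) ∈ piece2 := by
  obtain ⟨hX, hlt⟩ := hp
  rw [mem_Xsq] at hX
  obtain ⟨⟨hx0, hx1⟩, hy0, hy1⟩ := hX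
  have hq : ((lam * p.1, lam * p.2 + (1 - lam)) : ℝ × ℝ).1 = lam * p.1 := rfl
  have hq2 : ((lam * p.1, lam * p.2 + (1 - lam)) : ℝ × ℝ).2 = lam * p.2 + (1 - lam) := rfl
  refine ⟨mem_Xsq.2 ⟨⟨?_, ?_⟩, ?_, ?_⟩, ?_⟩ <;> simp only [hq, hq2]
  · positivity
  · nlinarith
  · nlinarith
  · nlinarith
  · nlinarith [sq_nonneg p.1, mul_pos hl0 hl0, sq_nonneg (p.1 * lam)]

lemma image_true_subset_piece2 (hl0 : 0 < lam) (hl1 : lam < 1)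
    (h2 : ∀ p ∈ piece2, f p = (lam * p.1, lam * p.2 + (1 - lam))) :
    f '' (A ∩ piece2) ⊆ piece2 := by
  rintro _ ⟨p, ⟨_, hp2⟩, rfl⟩
  rw [h2 p hp2]
  exact g_maps_piece2 hl0 hl1 hp2

lemma Ftrue_subset_upper (hl0 : 0 < lam) (hl1 : lam < 1)
    (h2 : ∀ p ∈ piece2, f p = (lam * p.1, lam * p.2 + (1 - lam))) :
    closure (f '' (A ∩ piece2)) ⊆ {q : ℝ × ℝ | q.1 ^ 2 ≤ q.2} := by
  refine closure_minimal ?_ ?_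
  · exact (image_true_subset_piece2 hl0 hl1 h2).trans fun q hq => le_of_lt hq.2
  · exact isClosed_le (by fun_prop) (by fun_prop)

lemma pattern_empty (hl0 : 0 < lam) (hl1 : lam < 1)
    (h2 : ∀ p ∈ piece2, f p = (lam * p.1, lam * p.2 + (1 - lam)))
    (l1 l2 : List Bool) : atomSq f (l1 ++ true :: false :: l2) = ∅ := by
  show atomFrom f Xsq (l1 ++ true :: false :: l2) = ∅
  have : l1 ++ true :: false :: l2 = (l1 ++ [true, false]) ++ l2 := by simp
  rw [this, atomFrom_append, atomFrom_append]
  have h0 : atomFrom f (atomFrom f Xsq l1) [true, false] = ∅ := by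
    show closure (f '' (closure (f '' (atomFrom f Xsq l1 ∩ pieceB true)) ∩ pieceB false)) = ∅
    have hd : closure (f '' (atomFrom f Xsq l1 ∩ pieceB true)) ∩ pieceB false = ∅ := by
      apply Set.eq_empty_of_forall_notMem
      rintro q ⟨hq, hq1⟩
      have := Ftrue_subset_upper hl0 hl1 h2 (A := atomFrom f Xsq l1) hq
      exact absurd (mem_piece1.1 hq1).2 (not_lt.2 this)
    rw [hd]
    simp
  rw [h0, atomFrom_empty]

lemma UB_false (hl0 : 0 < lam)
    (h1 : ∀ p ∈ piece1, f p = (lam * p.1, lam * p.2))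
    {a b : ℝ} (hA : A ⊆ Set.Icc 0 a ×ˢ Set.Icc 0 b) :
    closure (f '' (A ∩ piece1)) ⊆ Set.Icc 0 (lam * a) ×ˢ Set.Icc 0 (lam * b) := by
  refine closure_minimal ?_ (IsClosed.prod isClosed_Icc isClosed_Icc)
  rintro _ ⟨p, ⟨hpA, hp1⟩, rfl⟩
  obtain ⟨⟨hx0, hx1⟩, hy0, hy1⟩ := hA hpA
  rw [h1 p hp1]
  refine Set.mem_prod.2 ⟨Set.mem_Icc.2 ⟨?_, ?_⟩, Set.mem_Icc.2 ⟨?_, ?_⟩⟩ <;> dsimp only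
  · positivity
  · nlinarith
  · positivity
  · nlinarith

lemma UB_true (hl0 : 0 < lam)
    (h2 : ∀ p ∈ piece2, f p = (lam * p.1, lam * p.2 + (1 - lam)))
    {a c d : ℝ} (hA : A ⊆ Set.Icc 0 a ×ˢ Set.Icc c d) :
    closure (f '' (A ∩ piece2)) ⊆
      Set.Icc 0 (lam * a) ×ˢ Set.Icc (lam * c + (1 - lam)) (lam * d + (1 - lam)) := by
  refine closure_minimal ?_ (IsClosed.prod isClosed_Icc isClosed_Icc)
  rintro _ ⟨p, ⟨hpA, hp2⟩, rfl⟩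
  obtain ⟨⟨hx0, hx1⟩, hy0, hy1⟩ := hA hpA
  rw [h2 p hp2]
  refine Set.mem_prod.2 ⟨Set.mem_Icc.2 ⟨?_, ?_⟩, Set.mem_Icc.2 ⟨?_, ?_⟩⟩ <;> dsimp only
  · positivity
  · nlinarith
  · nlinarith
  · nlinarith

lemma UB_rep_false (hl0 : 0 < lam) (hl1 : lam < 1)
    (h1 : ∀ p ∈ piece1, f p = (lam * p.1, lam * p.2)) (j : ℕ) :
    atomSq f (List.replicate j false) ⊆ Set.Icc 0 (lam ^ j) ×ˢ Set.Icc 0 (lam ^ j) := by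
  induction j with
  | zero =>
      simp only [List.replicate_zero, pow_zero]
      exact fun p hp => hp
  | succ j ih =>
      rw [List.replicate_succ']
      show atomFrom f Xsq (List.replicate j false ++ [false]) ⊆ _
      rw [atomFrom_append]
      have : atomFrom f (atomFrom f Xsq (List.replicate j false)) [false] =
          closure (f '' (atomSq f (List.replicate j false) ∩ piece1)) := rfl
      rw [this]
      have := UB_false (A := atomSq f (List.replicate j false)) hl0 h1 ih
      rwa [← pow_succ'] at this

lemma UB_atom (hl0 : 0 < lam) (hl1 : lam < 1)
    (h1 : ∀ p ∈ piece1, f p = (lam * p.1, lam * p.2))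
    (h2 : ∀ p ∈ piece2, f p = (lam * p.1, lam * p.2 + (1 - lam))) (j k : ℕ) :
    atomSq f (List.replicate j false ++ List.replicate k true) ⊆
      Set.Icc 0 (lam ^ (j + k)) ×ˢ Set.Icc (1 - lam ^ k) (1 - lam ^ k + lam ^ (j + k)) := by
  induction k with
  | zero =>
      simp only [List.replicate_zero, List.append_nil, pow_zero, Nat.add_zero]
      refine (UB_rep_false hl0 hl1 h1 j).trans ?_
      norm_num
  | succ k ih =>
      have hsplit : List.replicate j false ++ List.replicate (k+1) true =
          (List.replicate j false ++ List.replicate k true) ++ [true] := by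
        rw [List.replicate_succ' (n := k)]; simp
      rw [hsplit]
      show atomFrom f Xsq _ ⊆ _
      rw [atomFrom_append]
      have heq : atomFrom f (atomFrom f Xsq (List.replicate j false ++ List.replicate k true))
          [true] = closure (f '' (atomSq f (List.replicate j false ++ List.replicate k true)
            ∩ piece2)) := rfl
      rw [heq]
      refine (UB_true hl0 h2 ih).trans ?_
      have e1 : lam * lam ^ (j + k) = lam ^ (j + (k+1)) := by ring
      have e2 : lam * (1 - lam ^ k) + (1 - lam) = 1 - lam ^ (k+1) := by ring
      have e3 : lam * (1 - lam ^ k + lam ^ (j + k)) + (1 - lam) =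
          1 - lam ^ (k+1) + lam ^ (j + (k+1)) := by ring
      rw [e1, e2, e3]

lemma atom_snoc (f : ℝ × ℝ → ℝ × ℝ) (l : List Bool) (b : Bool) :
    atomSq f (l ++ [b]) = closure (f '' (atomSq f l ∩ pieceB b)) := by
  show atomFrom f Xsq (l ++ [b]) = _
  rw [atomFrom_append]
  rfl

lemma tendsto_aux (c : ℝ) : Tendsto (fun m : ℕ => c * (1 / (m + 1))) atTop (nhds 0) := by
  have := tendsto_one_div_add_atTop_nhds_zero_nat (𝕜 := ℝ)
  simpa using this.const_mul c

/-- Points `(x,0)` with `0 < x ≤ lam^j` are in the atom of `j` falses. -/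
lemma LB_false_seg (hl0 : 0 < lam) (hl1 : lam < 1)
    (h1 : ∀ p ∈ piece1, f p = (lam * p.1, lam * p.2)) :
    ∀ j : ℕ, ∀ x : ℝ, 0 < x → x ≤ lam ^ j →
      ((x, (0:ℝ)) : ℝ × ℝ) ∈ atomSq f (List.replicate j false) := by
  intro j
  induction j with
  | zero =>
      intro x hx0 hx1
      simp only [pow_zero] at hx1
      exact mem_Xsq.2 ⟨⟨hx0.le, hx1⟩, le_refl _, zero_le_one⟩
  | succ j ih =>
      intro x hx0 hx1
      rw [List.replicate_succ', atom_snoc]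
      apply subset_closure
      have hxlam : x / lam ≤ lam ^ j := by
        rw [div_le_iff₀ hl0]
        calc x ≤ lam ^ (j+1) := hx1
        _ = lam ^ j * lam := by ring
      have hxpos : 0 < x / lam := div_pos hx0 hl0
      have hmem : ((x / lam, (0:ℝ)) : ℝ × ℝ) ∈ atomSq f (List.replicate j false) ∩ pieceB false := by
        refine ⟨ih _ hxpos hxlam, ?_⟩
        show ((x / lam, (0:ℝ)) : ℝ × ℝ) ∈ piece1
        refine mem_piece1.2 ⟨mem_Xsq.2 ⟨⟨hxpos.le, hxlam.trans (pow_le_one₀ hl0.le hl1.le)⟩,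
          le_refl _, zero_le_one⟩, ?_⟩
        show (0:ℝ) < (x / lam) ^ 2
        positivity
      refine ⟨_, hmem, ?_⟩
      rw [h1 _ hmem.2]
      have : lam * (x / lam) = x := by field_simp
      simp [this]

lemma LB_origin (hl0 : 0 < lam) (hl1 : lam < 1)
    (h1 : ∀ p ∈ piece1, f p = (lam * p.1, lam * p.2)) (j : ℕ) :
    ((0:ℝ), (0:ℝ)) ∈ atomSq f (List.replicate j false) := by
  cases j with
  | zero => exact mem_Xsq.2 ⟨⟨le_refl _, zero_le_one⟩, le_refl _, zero_le_one⟩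
  | succ j =>
      have hcl : IsClosed (atomSq f (List.replicate (j+1) false)) := by
        rw [List.replicate_succ', atom_snoc]
        exact isClosed_closure
      have htt : Tendsto (fun m : ℕ => ((lam ^ (j+1) * (1 / (m + 1)), (0:ℝ)) : ℝ × ℝ))
          atTop (nhds (((0:ℝ), (0:ℝ)) : ℝ × ℝ)) := by
        have h := tendsto_aux (lam ^ (j+1))
        exact h.prodMk_nhds tendsto_const_nhds
      refine hcl.mem_of_tendsto htt ?_
      · refine Filter.Eventually.of_forall fun m => ?_
        refine LB_false_seg hl0 hl1 h1 (j+1) _ ?_ ?_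
        · have : (0:ℝ) < (m:ℝ) + 1 := by positivity
          positivity
        · have h1m : 1 / ((m:ℝ) + 1) ≤ 1 := by
            rw [div_le_one (by positivity)]
            simp
          nlinarith [pow_pos hl0 (j+1)]

/-- Points `(0,v)` with `1-lam^n < v ≤ 1` are in the atom of `n` trues. -/
lemma LB_true_seg (hl0 : 0 < lam) (hl1 : lam < 1)
    (h2 : ∀ p ∈ piece2, f p = (lam * p.1, lam * p.2 + (1 - lam))) :
    ∀ n : ℕ, ∀ v : ℝ, 1 - lam ^ n < v → v ≤ 1 →
      (((0:ℝ), v) : ℝ × ℝ) ∈ atomSq f (List.replicate n true) := by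
  intro n
  induction n with
  | zero =>
      intro v hv0 hv1
      simp only [pow_zero] at hv0
      exact mem_Xsq.2 ⟨⟨le_refl _, zero_le_one⟩, by linarith, hv1⟩
  | succ n ih =>
      intro v hv0 hv1
      rw [List.replicate_succ', atom_snoc]
      apply subset_closure
      set w := (v - (1 - lam)) / lam with hw
      have hwval : lam * w + (1 - lam) = v := by
        rw [hw]; field_simp; ring
      have hln : (0:ℝ) < lam ^ n := pow_pos hl0 n
      have hlnle : lam ^ n ≤ 1 := pow_le_one₀ hl0.le hl1.le
      have hw0 : 1 - lam ^ n < w := by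
        rw [hw, lt_div_iff₀ hl0]
        have : lam ^ (n+1) = lam ^ n * lam := by ring
        nlinarith
      have hw1 : w ≤ 1 := by
        rw [hw, div_le_one hl0]; linarith
      have hwpos : 0 < w := by nlinarith
      have hmem : (((0:ℝ), w) : ℝ × ℝ) ∈ atomSq f (List.replicate n true) ∩ pieceB true := by
        refine ⟨ih w hw0 hw1, ?_⟩
        show (((0:ℝ), w) : ℝ × ℝ) ∈ piece2
        refine mem_piece2.2 ⟨mem_Xsq.2 ⟨⟨le_refl _, zero_le_one⟩, hwpos.le, hw1⟩, ?_⟩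
        show (0:ℝ) ^ 2 < w
        simpa using hwpos
      refine ⟨_, hmem, ?_⟩
      rw [h2 _ hmem.2]
      simp only [mul_zero]
      rw [hwval]

lemma LB_true (hl0 : 0 < lam) (hl1 : lam < 1)
    (h2 : ∀ p ∈ piece2, f p = (lam * p.1, lam * p.2 + (1 - lam)))
    (n : ℕ) (v : ℝ) (hv0 : 1 - lam ^ n ≤ v) (hv1 : v ≤ 1) :
    (((0:ℝ), v) : ℝ × ℝ) ∈ atomSq f (List.replicate n true) := by
  rcases lt_or_eq_of_le hv0 with h | h
  · exact LB_true_seg hl0 hl1 h2 n v h hv1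
  · subst h
    cases n with
    | zero =>
        simp only [pow_zero]
        exact mem_Xsq.2 ⟨⟨le_refl _, zero_le_one⟩, by norm_num, by norm_num⟩
    | succ n =>
        have hcl : IsClosed (atomSq f (List.replicate (n+1) true)) := by
          rw [List.replicate_succ', atom_snoc]
          exact isClosed_closure
        have hln : (0:ℝ) < lam ^ (n+1) := pow_pos hl0 _
        have htt : Tendsto (fun m : ℕ =>
            (((0:ℝ), 1 - lam ^ (n+1) + lam ^ (n+1) * (1 / (m + 1))) : ℝ × ℝ))
            atTop (nhds (((0:ℝ), 1 - lam ^ (n+1)) : ℝ × ℝ)) := by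
          have h := tendsto_aux (lam ^ (n+1))
          have h2' : Tendsto (fun m : ℕ => 1 - lam ^ (n+1) + lam ^ (n+1) * (1 / (m + 1)))
              atTop (nhds (1 - lam ^ (n+1) + 0)) := tendsto_const_nhds.add h
          rw [add_zero] at h2'
          exact tendsto_const_nhds.prodMk_nhds h2'
        refine hcl.mem_of_tendsto htt ?_
        · refine Filter.Eventually.of_forall fun m => ?_
          have hm : (0:ℝ) < 1 / ((m:ℝ) + 1) := by positivity
          have hm1 : 1 / ((m:ℝ) + 1) ≤ 1 := by
            rw [div_le_one (by positivity)]; simp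
          refine LB_true_seg hl0 hl1 h2 (n+1) _ (by nlinarith) (by nlinarith)

/-- Region below the parabola `v = u^2/lam` invariant lemma. -/
lemma LB_B (hl0 : 0 < lam) (hl1 : lam < 1)
    (h1 : ∀ p ∈ piece1, f p = (lam * p.1, lam * p.2)) :
    ∀ j : ℕ, ∀ u v : ℝ, 0 < u → u ≤ lam ^ (j+1) → 0 ≤ v → v * lam < u ^ 2 →
      ((u, v) : ℝ × ℝ) ∈ atomSq f (List.replicate (j+1) false) := by
  have key : ∀ (A : Set (ℝ × ℝ)) (u v : ℝ), 0 < u → 0 ≤ v → v * lam < u ^ 2 → u ≤ lam →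
      v / lam ≤ 1 → ((u / lam, v / lam) : ℝ × ℝ) ∈ A →
      ((u, v) : ℝ × ℝ) ∈ closure (f '' (A ∩ piece1)) := by
    intro A u v hu hv hv2 hu1 hXv hmem
    apply subset_closure
    have hp1 : ((u / lam, v / lam) : ℝ × ℝ) ∈ piece1 := by
      refine mem_piece1.2 ⟨mem_Xsq.2 ⟨⟨by positivity, ?_⟩, by positivity, hXv⟩, ?_⟩
      · rw [div_le_one hl0]; exact hu1
      · show v / lam < (u / lam) ^ 2
        rw [div_pow, div_lt_div_iff₀ hl0 (by positivity)]
        nlinarith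
    refine ⟨_, ⟨hmem, hp1⟩, ?_⟩
    rw [h1 _ hp1]
    have e1 : lam * (u / lam) = u := by field_simp
    have e2 : lam * (v / lam) = v := by field_simp
    show (lam * (u / lam), lam * (v / lam)) = (u, v)
    rw [e1, e2]
  intro j
  induction j with
  | zero =>
      intro u v hu hu1 hv hv2
      rw [show List.replicate 1 false = [] ++ [false] from rfl, atom_snoc]
      simp only [zero_add, pow_one] at hu1
      have hu2 : u ^ 2 ≤ lam ^ 2 := by nlinarith
      refine key Xsq u v hu hv hv2 hu1 ?_ ?_
      · rw [div_le_one hl0]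
        nlinarith
      · refine mem_Xsq.2 ⟨⟨by positivity, ?_⟩, by positivity, ?_⟩
        · rw [div_le_one hl0]; exact hu1
        · rw [div_le_one hl0]; nlinarith
  | succ j ih =>
      intro u v hu hu1 hv hv2
      rw [List.replicate_succ', atom_snoc]
      have hlj : lam ^ (j+2) ≤ lam := by
        have := pow_le_pow_of_le_one hl0.le hl1.le (show 1 ≤ j + 2 by omega)
        rwa [pow_one] at this
      have hu1' : u ≤ lam := hu1.trans hlj
      refine key _ u v hu hv hv2 hu1' ?_ ?_
      · rw [div_le_one hl0]
        nlinarith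
      · refine ih (u / lam) (v / lam) (by positivity) ?_ (by positivity) ?_
        · rw [div_le_iff₀ hl0]
          calc u ≤ lam ^ (j+2) := hu1
          _ = lam ^ (j+1) * lam := by ring
        · show v / lam * lam < (u / lam) ^ 2
          have e2 : v / lam * lam = v := by field_simp
          rw [e2, div_pow, lt_div_iff₀ (by positivity)]
          nlinarith

lemma LB_B' (hl0 : 0 < lam) (hl1 : lam < 1)
    (h1 : ∀ p ∈ piece1, f p = (lam * p.1, lam * p.2))
    {j : ℕ} (hj : 1 ≤ j) {u v : ℝ} (hu : 0 < u) (hu1 : u ≤ lam ^ j) (hv : 0 ≤ v)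
    (hv2 : v * lam < u ^ 2) :
    ((u, v) : ℝ × ℝ) ∈ atomSq f (List.replicate j false) := by
  obtain ⟨j', rfl⟩ : ∃ j', j = j' + 1 := ⟨j - 1, by omega⟩
  exact LB_B hl0 hl1 h1 j' u v hu hu1 hv hv2

/-- The curve points pushed through `k` applications of the second map. -/
lemma curve_mem (hl0 : 0 < lam) (hl1 : lam < 1)
    (h1 : ∀ p ∈ piece1, f p = (lam * p.1, lam * p.2))
    (h2 : ∀ p ∈ piece2, f p = (lam * p.1, lam * p.2 + (1 - lam)))
    {j : ℕ} (hj : 1 ≤ j) :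
    ∀ k : ℕ, ∀ u : ℝ, 0 < u → u ≤ lam ^ j →
      ((lam ^ (k+1) * u, 1 - lam ^ (k+1) + lam ^ (k+1) * (u ^ 2 * ((1 + lam) / (2 * lam))))
        : ℝ × ℝ) ∈ atomSq f (List.replicate j false ++ List.replicate (k+1) true) := by
  have hcu : ∀ u : ℝ, 0 < u → u ≤ lam ^ j →
      (0 < u ^ 2 * ((1 + lam) / (2 * lam)) ∧
       u ^ 2 < u ^ 2 * ((1 + lam) / (2 * lam)) ∧
       u ^ 2 * ((1 + lam) / (2 * lam)) * lam < u ^ 2 ∧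
       u ^ 2 * ((1 + lam) / (2 * lam)) ≤ 1) := by
    intro u hu0 hu1
    have hs1 : (1:ℝ) < (1 + lam) / (2 * lam) := by
      rw [lt_div_iff₀ (by positivity)]; linarith
    have hs2 : (1 + lam) / (2 * lam) * lam < 1 := by
      rw [div_mul_eq_mul_div, div_lt_one (by positivity)]; nlinarith
    have hl2 : lam ^ j ≤ lam := by
      have := pow_le_pow_of_le_one hl0.le hl1.le hj
      rwa [pow_one] at this
    have hu2 : (0:ℝ) < u ^ 2 := by positivity
    have husq : u ^ 2 ≤ lam ^ 2 := by nlinarith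
    have hvgt : u ^ 2 < u ^ 2 * ((1 + lam) / (2 * lam)) := by
      nlinarith [mul_pos hu2 (sub_pos.2 hs1)]
    have hvlam : u ^ 2 * ((1 + lam) / (2 * lam)) * lam < u ^ 2 := by
      nlinarith [mul_pos hu2 (sub_pos.2 hs2)]
    refine ⟨by positivity, hvgt, hvlam, ?_⟩
    -- vu * lam < u^2 ≤ lam^2 so vu < lam ≤ 1
    nlinarith [hvlam, husq, mul_pos hl0 (sub_pos.2 hl1)]
  intro k
  induction k with
  | zero =>
      intro u hu0 hu1
      have hv := hcu u hu0 hu1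
      obtain ⟨hv0, hvgt, hvlam, hvle⟩ := hv
      rw [show List.replicate 1 true = [true] from rfl, atom_snoc]
      apply subset_closure
      have hmem : ((u, u ^ 2 * ((1 + lam) / (2 * lam))) : ℝ × ℝ) ∈
          atomSq f (List.replicate j false) ∩ piece2 := by
        refine ⟨LB_B' hl0 hl1 h1 hj hu0 hu1 hv0.le hvlam, ?_⟩
        refine mem_piece2.2 ⟨mem_Xsq.2 ⟨⟨hu0.le, ?_⟩, hv0.le, hvle⟩, hvgt⟩
        exact hu1.trans (pow_le_one₀ hl0.le hl1.le)
      refine ⟨_, hmem, ?_⟩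
      rw [h2 _ hmem.2]
      show (lam * u, lam * (u ^ 2 * ((1 + lam) / (2 * lam))) + (1 - lam)) = _
      simp only [Prod.mk.injEq]
      exact ⟨by ring, by ring⟩
  | succ k ih =>
      intro u hu0 hu1
      have hv := hcu u hu0 hu1
      obtain ⟨hv0, hvgt, hvlam, hvle⟩ := hv
      set vu := u ^ 2 * ((1 + lam) / (2 * lam)) with hvu
      have hsplit : List.replicate j false ++ List.replicate (k+2) true =
          (List.replicate j false ++ List.replicate (k+1) true) ++ [true] := by
        rw [List.replicate_succ' (n := k+1)]; simp
      rw [hsplit, atom_snoc]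
      apply subset_closure
      have hlk : (0:ℝ) < lam ^ (k+1) := pow_pos hl0 _
      have hlk1 : lam ^ (k+1) ≤ 1 := pow_le_one₀ hl0.le hl1.le
      have hu01 : u ≤ 1 := hu1.trans (pow_le_one₀ hl0.le hl1.le)
      have hmem : ((lam ^ (k+1) * u, 1 - lam ^ (k+1) + lam ^ (k+1) * vu) : ℝ × ℝ) ∈
          atomSq f (List.replicate j false ++ List.replicate (k+1) true) ∩ piece2 := by
        refine ⟨ih u hu0 hu1, ?_⟩
        refine mem_piece2.2 ⟨mem_Xsq.2 ⟨⟨by positivity, ?_⟩, ?_, ?_⟩, ?_⟩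
        · show lam ^ (k+1) * u ≤ 1
          exact mul_le_one₀ hlk1 hu0.le hu01
        · show (0:ℝ) ≤ 1 - lam ^ (k+1) + lam ^ (k+1) * vu
          nlinarith [mul_pos hlk hv0]
        · show 1 - lam ^ (k+1) + lam ^ (k+1) * vu ≤ 1
          nlinarith [mul_nonneg hlk.le (by linarith : (0:ℝ) ≤ 1 - vu)]
        · show (lam ^ (k+1) * u) ^ 2 < 1 - lam ^ (k+1) + lam ^ (k+1) * vu
          have ha : (lam ^ (k+1) * u) ^ 2 ≤ lam ^ (k+1) * u ^ 2 := by
            nlinarith [mul_nonneg hlk.le (sq_nonneg u), sub_nonneg.2 hlk1,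
              mul_nonneg (sub_nonneg.2 hlk1) (mul_nonneg hlk.le (sq_nonneg u))]
          have hb : lam ^ (k+1) * u ^ 2 < lam ^ (k+1) * vu := by
            nlinarith [mul_pos hlk (sub_pos.2 hvgt)]
          linarith
      refine ⟨_, hmem, ?_⟩
      rw [h2 _ hmem.2]
      show (lam * (lam ^ (k+1) * u), lam * (1 - lam ^ (k+1) + lam ^ (k+1) * vu) + (1 - lam)) = _
      simp only [Prod.mk.injEq]
      exact ⟨by ring, by ring⟩

lemma LB_mixed (hl0 : 0 < lam) (hl1 : lam < 1)
    (h1 : ∀ p ∈ piece1, f p = (lam * p.1, lam * p.2))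
    (h2 : ∀ p ∈ piece2, f p = (lam * p.1, lam * p.2 + (1 - lam)))
    {j k : ℕ} (hj : 1 ≤ j) (hk : 1 ≤ k) :
    (((0:ℝ), 1 - lam ^ k) : ℝ × ℝ) ∈
      atomSq f (List.replicate j false ++ List.replicate k true) := by
  obtain ⟨k', rfl⟩ : ∃ k', k = k' + 1 := ⟨k - 1, by omega⟩
  have hcl : IsClosed (atomSq f (List.replicate j false ++ List.replicate (k'+1) true)) := by
    have hsplit : List.replicate j false ++ List.replicate (k'+1) true =
        (List.replicate j false ++ List.replicate k' true) ++ [true] := by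
      rw [List.replicate_succ' (n := k')]; simp
    rw [hsplit, atom_snoc]
    exact isClosed_closure
  set φ : ℝ → ℝ × ℝ := fun u =>
    ((lam ^ (k'+1) * u, 1 - lam ^ (k'+1) + lam ^ (k'+1) * (u ^ 2 * ((1 + lam) / (2 * lam)))) :
      ℝ × ℝ) with hφ
  have hφc : Continuous φ := by
    rw [hφ]; fun_prop
  have h0 : φ 0 = (((0:ℝ), 1 - lam ^ (k'+1)) : ℝ × ℝ) := by
    rw [hφ]; norm_num
  have htt : Tendsto (fun m : ℕ => φ (lam ^ j * (1 / (m + 1)))) atTop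
      (nhds (((0:ℝ), 1 - lam ^ (k'+1)) : ℝ × ℝ)) := by
    rw [← h0]
    exact (hφc.tendsto 0).comp (tendsto_aux (lam ^ j))
  refine hcl.mem_of_tendsto htt (Filter.Eventually.of_forall fun m => ?_)
  have hm0 : (0:ℝ) < 1 / ((m:ℝ) + 1) := by positivity
  have hm1 : 1 / ((m:ℝ) + 1) ≤ 1 := by
    rw [div_le_one (by positivity)]; simp
  refine curve_mem hl0 hl1 h1 h2 hj k' (lam ^ j * (1 / (m + 1))) (by positivity) ?_
  nlinarith [pow_pos hl0 j]

end geom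

lemma shape_of_no_pattern : ∀ l : List Bool, (∀ l1 l2, l ≠ l1 ++ true :: false :: l2) →
    ∃ j k, l = List.replicate j false ++ List.replicate k true
  | [], _ => ⟨0, 0, rfl⟩
  | false :: l, h => by
      obtain ⟨j, k, hl⟩ := shape_of_no_pattern l
        (fun l1 l2 hE => h (false :: l1) l2 (by simp [hE]))
      exact ⟨j + 1, k, by simp [List.replicate_succ, hl]⟩
  | true :: l, h => by
      obtain ⟨j, k, hl⟩ := shape_of_no_pattern l
        (fun l1 l2 hE => h (true :: l1) l2 (by simp [hE]))
      cases j with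
      | zero => exact ⟨0, k + 1, by simp [List.replicate_succ, hl]⟩
      | succ j =>
          exact absurd (h [] (List.replicate j false ++ List.replicate k true))
            (by simp [hl, List.replicate_succ])

section main

variable {lam : ℝ} {f : ℝ × ℝ → ℝ × ℝ}

lemma part1 (hl0 : 0 < lam) (hl1 : lam < 1)
    (h2 : ∀ p ∈ piece2, f p = (lam * p.1, lam * p.2 + (1 - lam))) :
    ∀ l : List Bool, (atomSq f l).Nonempty →
      ∃ j k : ℕ, l = List.replicate j false ++ List.replicate k true := by
  intro l hne
  by_contra hsh
  have hpat : ¬ (∀ l1 l2, l ≠ l1 ++ true :: false :: l2) :=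
    fun h => hsh (shape_of_no_pattern l h)
  push_neg at hpat
  obtain ⟨l1, l2, hE⟩ := hpat
  rw [hE, pattern_empty hl0 hl1 h2] at hne
  exact Set.not_nonempty_empty hne

lemma mem_LamSq {p : ℝ × ℝ} : p ∈ LamSq f ↔
    ∀ n : ℕ, 1 ≤ n → ∃ l : List Bool, l.length = n ∧ p ∈ atomSq f l := by
  simp [LamSq, Set.mem_iInter, Set.mem_iUnion, Set.mem_setOf_eq]

lemma upper (hl0 : 0 < lam) (hl1 : lam < 1) {p : ℝ × ℝ} (kf : ℕ → ℕ)
    (hk1 : ∀ n, kf n ≤ n + 1)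
    (hbox : ∀ n : ℕ, p ∈ Set.Icc (0:ℝ) (lam ^ (n+1)) ×ˢ
      Set.Icc (1 - lam ^ (kf n)) (1 - lam ^ (kf n) + lam ^ (n+1))) :
    p = (((0:ℝ), (0:ℝ)) : ℝ × ℝ) ∨ (∃ k, 1 ≤ k ∧ p = (((0:ℝ), 1 - lam ^ k) : ℝ × ℝ)) ∨
      p = (((0:ℝ), (1:ℝ)) : ℝ × ℝ) := by
  have htend0 : Tendsto (fun n : ℕ => lam ^ n) atTop (nhds 0) :=
    tendsto_pow_atTop_nhds_zero_of_lt_one hl0.le hl1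
  have htend : Tendsto (fun n : ℕ => lam ^ (n+1)) atTop (nhds 0) :=
    htend0.comp (tendsto_add_atTop_nat 1)
  have hx : p.1 = 0 :=
    le_antisymm (ge_of_tendsto' htend fun n => (hbox n).1.2) (hbox 0).1.1
  have hy1 : p.2 ≤ 1 := by
    have h0 := (hbox 0).2.2
    have : lam ^ (0+1) ≤ lam ^ (kf 0) := pow_le_pow_of_le_one hl0.le hl1.le (hk1 0)
    linarith
  rcases eq_or_lt_of_le hy1 with heq | hlt
  · right; right
    have : p = (p.1, p.2) := rfl
    rw [this, hx, heq]
  · -- p.2 < 1 : kf is bounded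
    obtain ⟨K, hK⟩ := Filter.eventually_atTop.1 (htend0.eventually (gt_mem_nhds
      (show (0:ℝ) < 1 - p.2 by linarith)))
    have hKb : ∀ n, kf n < K := by
      intro n
      by_contra hc
      push_neg at hc
      have h1' := hK (kf n) hc
      have h2' := (hbox n).2.1
      linarith
    have hpig : ∃ k₀, ∀ m, ∃ n, m ≤ n ∧ kf n = k₀ := by
      by_contra hcon
      push_neg at hcon
      choose M hM using hcon
      set N := (Finset.range K).sup M with hN
      exact hM (kf N) N (Finset.le_sup (Finset.mem_range.2 (hKb N))) rfl
    obtain ⟨k₀, hk₀⟩ := hpig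
    have hge : 1 - lam ^ k₀ ≤ p.2 := by
      obtain ⟨n, _, hn⟩ := hk₀ 0
      have := (hbox n).2.1
      rwa [hn] at this
    have hle : p.2 ≤ 1 - lam ^ k₀ := by
      have hall : ∀ m : ℕ, p.2 ≤ 1 - lam ^ k₀ + lam ^ (m+1) := by
        intro m
        obtain ⟨n, hnm, hn⟩ := hk₀ m
        have hb := (hbox n).2.2
        rw [hn] at hb
        have : lam ^ (n+1) ≤ lam ^ (m+1) :=
          pow_le_pow_of_le_one hl0.le hl1.le (by omega)
        linarith
      have htt : Tendsto (fun m : ℕ => 1 - lam ^ k₀ + lam ^ (m+1)) atTop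
          (nhds (1 - lam ^ k₀ + 0)) := Tendsto.add tendsto_const_nhds htend
      rw [add_zero] at htt
      exact ge_of_tendsto' htt hall
    have hy : p.2 = 1 - lam ^ k₀ := le_antisymm hle hge
    cases k₀ with
    | zero =>
        left
        have : p = (p.1, p.2) := rfl
        rw [this, hx, hy]
        norm_num
    | succ k₀ =>
        right; left
        refine ⟨k₀ + 1, by omega, ?_⟩
        have : p = (p.1, p.2) := rfl
        rw [this, hx, hy]

end main
end Ex15

/-- In the setting of Example 14, every admissible itinerary (one whose atom is
nonempty) is a block of `1`s followed by a block of `2`s, and consequently the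
attractor is `{(0,0)} ∪ {(0, 1 − λᵏ) : k ≥ 1} ∪ {(0,1)}`. -/
theorem example15 (lam : ℝ) (hlam : lam ∈ Set.Ioo (0:ℝ) 1)
    (f : ℝ × ℝ → ℝ × ℝ)
    (h1 : ∀ p ∈ piece1, f p = (lam * p.1, lam * p.2))
    (h2 : ∀ p ∈ piece2, f p = (lam * p.1, lam * p.2 + (1 - lam)))
    (hf : Set.MapsTo f Xsq Xsq) :
    (∀ l : List Bool, (atomSq f l).Nonempty →
      ∃ j k : ℕ, l = List.replicate j false ++ List.replicate k true) ∧
    LamSq f = {((0:ℝ), (0:ℝ))} ∪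
      {q : ℝ × ℝ | ∃ k : ℕ, 1 ≤ k ∧ q = ((0:ℝ), 1 - lam ^ k)} ∪
      {((0:ℝ), (1:ℝ))} := by
  obtain ⟨hl0, hl1⟩ := hlam
  refine ⟨Ex15.part1 hl0 hl1 h2, ?_⟩
  ext p
  constructor
  · intro hp
    have hmem := Ex15.mem_LamSq.1 hp
    have hchoice : ∀ n : ℕ, ∃ k : ℕ, k ≤ n + 1 ∧
        p ∈ Set.Icc (0:ℝ) (lam ^ (n+1)) ×ˢ
          Set.Icc (1 - lam ^ k) (1 - lam ^ k + lam ^ (n+1)) := by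
      intro n
      obtain ⟨l, hlen, hpl⟩ := hmem (n+1) (by omega)
      obtain ⟨j, k, rfl⟩ := Ex15.part1 hl0 hl1 h2 l ⟨p, hpl⟩
      have hjk : j + k = n + 1 := by
        simpa using hlen
      refine ⟨k, by omega, ?_⟩
      have hU := Ex15.UB_atom hl0 hl1 h1 h2 j k hpl
      rwa [hjk] at hU
    choose kf hk1 hbox using hchoice
    rcases Ex15.upper hl0 hl1 kf hk1 hbox with h | h | h
    · exact Set.mem_union_left _ (Set.mem_union_left _ (Set.mem_singleton_iff.2 h))
    · exact Set.mem_union_left _ (Set.mem_union_right _ h)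
    · exact Set.mem_union_right _ (Set.mem_singleton_iff.2 h)
  · intro hp
    refine Ex15.mem_LamSq.2 fun n hn => ?_
    simp only [Set.mem_union, Set.mem_singleton_iff, Set.mem_setOf_eq] at hp
    rcases hp with (hp | hp) | hp
    · exact ⟨List.replicate n false, by simp,
        hp ▸ Ex15.LB_origin hl0 hl1 h1 n⟩
    · obtain ⟨k, hk, rfl⟩ := hp
      by_cases hnk : n ≤ k
      · refine ⟨List.replicate n true, by simp, Ex15.LB_true hl0 hl1 h2 n _ ?_ ?_⟩
        · have := pow_le_pow_of_le_one hl0.le hl1.le hnk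
          linarith
        · have := pow_pos hl0 k
          linarith
      · refine ⟨List.replicate (n - k) false ++ List.replicate k true, by simp; omega,
          Ex15.LB_mixed hl0 hl1 h1 h2 (by omega) hk⟩
    · refine ⟨List.replicate n true, by simp, hp ▸ Ex15.LB_true hl0 hl1 h2 n 1 ?_ le_rfl⟩
      have := pow_pos hl0 n
      linarith
end
end

section
/- Let B = {(x,y) ∈ ℝ² : 0 < y ≤ e^{−2π}, y·sin(π − log y) ≤ x ≤ y·sin(−log y)}. Then B = ⋃_{j=1}^∞ B_j, where B_j = {(x,y) : e^{−(2j+1)π} ≤ y ≤ e^{−2jπ}, y·sin(π − log y) ≤ x ≤ y·sin(−log y)}, and the sets B_j are nonempty, compact, connected, and pairwise disjoint; in particular B has infinitely many connected components. -/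
open Real

noncomputable section

/-- `B = {(x,y) : 0 < y ≤ e^{−2π}, y·sin(π − log y) ≤ x ≤ y·sin(−log y)}`. -/
def Bset : Set (ℝ × ℝ) :=
  {p | 0 < p.2 ∧ p.2 ≤ Real.exp (-(2 * π)) ∧
    p.2 * Real.sin (π - Real.log p.2) ≤ p.1 ∧ p.1 ≤ p.2 * Real.sin (-(Real.log p.2))}

/-- `B_j`: the part of the band `e^{−(2j+1)π} ≤ y ≤ e^{−2jπ}` between the graphs. -/
def Bj (j : ℕ) : Set (ℝ × ℝ) :=
  {p | Real.exp (-((2 * j + 1) * π)) ≤ p.2 ∧ p.2 ≤ Real.exp (-((2 * j) * π)) ∧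
    p.2 * Real.sin (π - Real.log p.2) ≤ p.1 ∧ p.1 ≤ p.2 * Real.sin (-(Real.log p.2))}

lemma lower_eq (y : ℝ) : y * Real.sin (π - Real.log y) = -(y * Real.sin (-(Real.log y))) := by
  rw [Real.sin_pi_sub, Real.sin_neg]; ring

lemma sin_nonneg_of_band (j : ℕ) {t : ℝ} (h1 : 2*(j:ℝ)*π ≤ t) (h2 : t ≤ (2*(j:ℝ)+1)*π) :
    0 ≤ Real.sin t := by
  have e : t = (t - (j:ℝ)*(2*π)) + (j:ℤ) * (2*π) := by push_cast; ring
  rw [e, Real.sin_add_int_mul_two_pi]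
  exact Real.sin_nonneg_of_nonneg_of_le_pi (by linarith) (by linarith)

/-- On the band of `Bj j`, the upper graph is nonnegative. -/
lemma c_nonneg (j : ℕ) {y : ℝ} (h1 : Real.exp (-((2 * j + 1) * π)) ≤ y)
    (h2 : y ≤ Real.exp (-((2 * j) * π))) : 0 ≤ y * Real.sin (-(Real.log y)) := by
  have hy : 0 < y := lt_of_lt_of_le (Real.exp_pos _) h1
  have hl1 : -((2 * (j:ℝ) + 1) * π) ≤ Real.log y := (Real.le_log_iff_exp_le hy).2 h1
  have hl2 : Real.log y ≤ -((2 * (j:ℝ)) * π) := (Real.log_le_iff_le_exp hy).2 h2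
  have := sin_nonneg_of_band j (t := -(Real.log y)) (by linarith) (by linarith)
  exact mul_nonneg hy.le this

lemma Bj_eq_image (j : ℕ) :
    Bj j = (fun q : ℝ × ℝ => (q.1 * (q.2 * Real.sin (-(Real.log q.2))), q.2)) ''
      (Set.Icc (-1:ℝ) 1 ×ˢ Set.Icc (Real.exp (-((2 * (j:ℝ) + 1) * π))) (Real.exp (-((2 * (j:ℝ)) * π)))) := by
  ext ⟨x, y⟩
  constructor
  · rintro ⟨h1, h2, h3, h4⟩
    simp only at h1 h2 h3 h4
    have hc : 0 ≤ y * Real.sin (-(Real.log y)) := c_nonneg j h1 h2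
    rw [lower_eq] at h3
    rcases eq_or_lt_of_le hc with hc0 | hc0
    · have hx : x = 0 := le_antisymm (by linarith) (by linarith)
      refine ⟨(0, y), ⟨⟨by norm_num, by norm_num⟩, h1, h2⟩, ?_⟩
      simp [hx]
    · refine ⟨(x / (y * Real.sin (-(Real.log y))), y),
        ⟨⟨?_, ?_⟩, h1, h2⟩, ?_⟩
      · rw [le_div_iff₀ hc0]; linarith
      · rw [div_le_one hc0]; exact h4
      · simp only
        rw [div_mul_cancel₀ _ (ne_of_gt hc0)]
  · rintro ⟨⟨u, y'⟩, ⟨⟨hu1, hu2⟩, h1, h2⟩, heq⟩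
    simp only at hu1 hu2 h1 h2
    simp only [Prod.mk.injEq] at heq
    obtain ⟨hx, hy⟩ := heq
    subst hy
    have hc := c_nonneg j h1 h2
    refine ⟨h1, h2, ?_, ?_⟩
    · simp only
      rw [lower_eq, ← hx]
      nlinarith [mul_nonneg (by linarith : (0:ℝ) ≤ 1 + u) hc]
    · simp only
      rw [← hx]
      nlinarith [mul_nonneg (by linarith : (0:ℝ) ≤ 1 - u) hc]

lemma Bj_props (j : ℕ) : (Bj j).Nonempty ∧ IsCompact (Bj j) ∧ IsConnected (Bj j) := by
  set D := Set.Icc (-1:ℝ) 1 ×ˢ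
      Set.Icc (Real.exp (-((2 * (j:ℝ) + 1) * π))) (Real.exp (-((2 * (j:ℝ)) * π))) with hD
  have hab : Real.exp (-((2 * (j:ℝ) + 1) * π)) ≤ Real.exp (-((2 * (j:ℝ)) * π)) := by
    apply Real.exp_le_exp.2; nlinarith [Real.pi_pos]
  have hK : IsCompact D := isCompact_Icc.prod isCompact_Icc
  have hne : D.Nonempty :=
    Set.Nonempty.prod ⟨0, by norm_num⟩ ⟨_, Set.left_mem_Icc.2 hab⟩
  have hconn : IsConnected D :=
    ⟨hne, ((convex_Icc _ _).prod (convex_Icc _ _)).isPreconnected⟩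
  have hlog : ContinuousOn (fun q : ℝ × ℝ => Real.log q.2) D := by
    apply Real.continuousOn_log.comp continuous_snd.continuousOn
    intro q hq
    rw [hD] at hq
    simp only [Set.mem_prod, Set.mem_Icc] at hq
    have : 0 < q.2 := lt_of_lt_of_le (Real.exp_pos _) hq.2.1
    simp [ne_of_gt this]
  have hcont : ContinuousOn (fun q : ℝ × ℝ => (q.1 * (q.2 * Real.sin (-(Real.log q.2))), q.2)) D :=
    (continuous_fst.continuousOn.mul (continuous_snd.continuousOn.mul
      (Real.continuous_sin.comp_continuousOn hlog.neg))).prodMk continuous_snd.continuousOn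
  rw [Bj_eq_image]
  exact ⟨hne.image _, hK.image_of_continuousOn hcont, hconn.image _ hcont⟩

lemma bands_lt {j k : ℕ} (h : j < k) :
    Real.exp (-((2 * (k:ℝ)) * π)) < Real.exp (-((2 * (j:ℝ) + 1) * π)) := by
  apply Real.exp_lt_exp.2
  have : (j:ℝ) + 1 ≤ (k:ℝ) := by exact_mod_cast h
  nlinarith [Real.pi_pos]

lemma Bj_disjoint {j k : ℕ} (h : j ≠ k) : Disjoint (Bj j) (Bj k) := by
  wlog hlt : j < k generalizing j k
  · exact (this h.symm (by omega)).symm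
  rw [Set.disjoint_left]
  rintro p ⟨h1, _, _, _⟩ ⟨_, h2', _, _⟩
  exact absurd (h1.trans h2') (not_le.2 (bands_lt hlt))

lemma Bset_eq_iUnion : Bset = ⋃ j ∈ {j : ℕ | 1 ≤ j}, Bj j := by
  ext p
  simp only [Set.mem_iUnion, Set.mem_setOf_eq, exists_prop]
  constructor
  · rintro ⟨hy, hy2, h3, h4⟩
    have hπ := Real.pi_pos
    set t : ℝ := -(Real.log p.2) with ht
    have hlow : 2 * π ≤ t := by
      have := (Real.log_le_iff_le_exp hy).2 hy2
      rw [ht]; linarith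
    have hsin : 0 ≤ Real.sin t := by
      rw [lower_eq] at h3
      nlinarith [h3, h4, hy]
    set n : ℕ := ⌊t / π⌋₊ with hn
    have htpos : 0 ≤ t / π := div_nonneg (by linarith) hπ.le
    have hfl : (n:ℝ) ≤ t / π := Nat.floor_le htpos
    have hfl2 : t / π < n + 1 := Nat.lt_floor_add_one _
    have hn2 : 2 ≤ n := by
      rw [hn, Nat.le_floor_iff htpos]
      rw [le_div_iff₀ hπ]; push_cast; linarith
    have hnl : (n:ℝ) * π ≤ t := by rw [← le_div_iff₀ hπ]; exact hfl
    have hnu : t < ((n:ℝ) + 1) * π := by rw [← div_lt_iff₀ hπ]; exact hfl2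
    obtain ⟨m, hm | hm⟩ := Nat.even_or_odd' n
    · -- n = 2m
      have hnr : ((n:ℝ)) = 2 * m := by exact_mod_cast congrArg (Nat.cast : ℕ → ℝ) hm
      rw [hnr] at hnl hnu
      rw [ht] at hnl hnu
      refine ⟨m, by omega, ?_, ?_, h3, h4⟩
      · exact (Real.le_log_iff_exp_le hy).1 (by linarith)
      · exact (Real.log_le_iff_le_exp hy).1 (by linarith)
    · -- n = 2m+1 : show t = n π
      have hnr : ((n:ℝ)) = 2 * m + 1 := by exact_mod_cast congrArg (Nat.cast : ℕ → ℝ) hm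
      have key : ∀ s : ℝ, Real.sin ((s + π) + (m:ℤ) * (2 * π)) = -Real.sin s := fun s => by
        rw [Real.sin_add_int_mul_two_pi, Real.sin_add_pi]
      have hteq : t = (n:ℝ) * π := by
        by_contra hne
        have hs1 : 0 < t - (n:ℝ) * π := lt_of_le_of_ne (by linarith) (fun h => hne (by linarith))
        have hs2 : t - (n:ℝ) * π < π := by linarith
        have hsin2 : Real.sin t = -Real.sin (t - (n:ℝ) * π) := by
          calc Real.sin t = Real.sin (((t - (n:ℝ) * π) + π) + (m:ℤ) * (2 * π)) := by
                congr 1; push_cast; rw [hnr]; ring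
            _ = -Real.sin (t - (n:ℝ) * π) := key _
        have := Real.sin_pos_of_pos_of_lt_pi hs1 hs2
        rw [hsin2] at hsin; linarith
      have h5 : -(Real.log p.2) = (2 * (m:ℝ) + 1) * π := by rw [← ht, hteq, hnr]
      refine ⟨m, by omega, ?_, ?_, h3, h4⟩
      · exact (Real.le_log_iff_exp_le hy).1 (by linarith)
      · exact (Real.log_le_iff_le_exp hy).1 (by nlinarith)
  · rintro ⟨j, hj, h1, h2, h3, h4⟩
    have hy : 0 < p.2 := lt_of_lt_of_le (Real.exp_pos _) h1
    refine ⟨hy, le_trans h2 (Real.exp_le_exp.2 ?_), h3, h4⟩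
    have : (1:ℝ) ≤ j := by exact_mod_cast hj
    nlinarith [Real.pi_pos]

/-- the reference point in `Bj j`. -/
def pt (j : ℕ) : ℝ × ℝ := (0, Real.exp (-((2 * (j:ℝ)) * π)))

lemma pt_mem (j : ℕ) : pt j ∈ Bj j := by
  have hs : Real.sin (-(Real.log (Real.exp (-((2 * (j:ℝ)) * π))))) = 0 := by
    rw [Real.log_exp, neg_neg]
    have e : (2 * (j:ℝ)) * π = 0 + (j:ℤ) * (2 * π) := by push_cast; ring
    rw [e, Real.sin_add_int_mul_two_pi, Real.sin_zero]
  refine ⟨?_, ?_, ?_, ?_⟩ <;> simp only [pt]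
  · exact Real.exp_le_exp.2 (by nlinarith [Real.pi_pos])
  · exact le_refl _
  · rw [lower_eq, hs]; simp
  · rw [hs]; simp

/-- A connected subset of `Bset` containing `pt j` and `pt k` (with `j,k ≥ 1`) forces `j = k`. -/
lemma conn_subset {C : Set (ℝ × ℝ)} (hC : IsPreconnected C) (hCB : C ⊆ Bset)
    {j k : ℕ} (hj : 1 ≤ j) (hk : 1 ≤ k) (hjC : pt j ∈ C) (hkC : pt k ∈ C) : j = k := by
  by_contra hne
  wlog hlt : j < k generalizing j k
  · exact this hk hj hkC hjC (Ne.symm hne) (by omega)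
  have hπ := Real.pi_pos
  have hS : IsPreconnected (Prod.snd '' C) := hC.image _ continuous_snd.continuousOn
  set y0 : ℝ := Real.exp (-((2 * (j:ℝ) + 3/2) * π)) with hy0
  have hmemk : Real.exp (-((2 * (k:ℝ)) * π)) ∈ Prod.snd '' C := ⟨pt k, hkC, rfl⟩
  have hmemj : Real.exp (-((2 * (j:ℝ)) * π)) ∈ Prod.snd '' C := ⟨pt j, hjC, rfl⟩
  have hkj : (j:ℝ) + 1 ≤ (k:ℝ) := by exact_mod_cast hlt
  have h1 : Real.exp (-((2 * (k:ℝ)) * π)) ≤ y0 := Real.exp_le_exp.2 (by nlinarith)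
  have h2 : y0 ≤ Real.exp (-((2 * (j:ℝ)) * π)) := Real.exp_le_exp.2 (by nlinarith)
  have hy0S : y0 ∈ Prod.snd '' C := hS.Icc_subset hmemk hmemj ⟨h1, h2⟩
  obtain ⟨p, hpC, hpy⟩ := hy0S
  have hpB : p ∈ Bset := hCB hpC
  rw [Bset_eq_iUnion] at hpB
  simp only [Set.mem_iUnion, Set.mem_setOf_eq, exists_prop] at hpB
  obtain ⟨m, _, hm1, hm2, _, _⟩ := hpB
  rw [hpy] at hm1 hm2
  have e1 : -((2 * (m:ℝ) + 1) * π) ≤ -((2 * (j:ℝ) + 3/2) * π) := by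
    have := Real.exp_le_exp.1 hm1; linarith
  have e2 : -((2 * (j:ℝ) + 3/2) * π) ≤ -((2 * (m:ℝ)) * π) := by
    have := Real.exp_le_exp.1 hm2; linarith
  have f1 : 2 * (j:ℝ) + 3/2 ≤ 2 * (m:ℝ) + 1 := by nlinarith
  have f2 : 2 * (m:ℝ) ≤ 2 * (j:ℝ) + 3/2 := by nlinarith
  have hjm : (j:ℝ) < m := by linarith
  have hjm' : j < m := by exact_mod_cast hjm
  have : (j:ℝ) + 1 ≤ m := by exact_mod_cast hjm'
  linarith

/-- `B` decomposes as the disjoint union of the nonempty compact connected sets `B_j`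
(`j ≥ 1`); in particular `B` has infinitely many connected components. -/
theorem Bset_decomposition :
    (Bset = ⋃ j ∈ {j : ℕ | 1 ≤ j}, Bj j) ∧
    (∀ j : ℕ, 1 ≤ j → (Bj j).Nonempty ∧ IsCompact (Bj j) ∧ IsConnected (Bj j)) ∧
    (∀ j k : ℕ, 1 ≤ j → 1 ≤ k → j ≠ k → Disjoint (Bj j) (Bj k)) ∧
    {C : Set (ℝ × ℝ) | ∃ x ∈ Bset, C = connectedComponentIn Bset x}.Infinite := by
  have hptB : ∀ j : ℕ, 1 ≤ j → pt j ∈ Bset := by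
    intro j hj
    rw [Bset_eq_iUnion]
    simp only [Set.mem_iUnion, Set.mem_setOf_eq, exists_prop]
    exact ⟨j, hj, pt_mem j⟩
  refine ⟨Bset_eq_iUnion, fun j _ => Bj_props j, fun j k _ _ h => Bj_disjoint h, ?_⟩
  apply Set.infinite_of_injective_forall_mem
    (f := fun n : ℕ => connectedComponentIn Bset (pt (n + 1)))
  · intro a b hab
    have h1 : pt (a + 1) ∈ connectedComponentIn Bset (pt (a + 1)) :=
      mem_connectedComponentIn (hptB _ (by omega))
    have hab' : connectedComponentIn Bset (pt (a + 1)) = connectedComponentIn Bset (pt (b + 1)) :=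
      hab
    have h2 : pt (b + 1) ∈ connectedComponentIn Bset (pt (a + 1)) := by
      rw [hab']; exact mem_connectedComponentIn (hptB _ (by omega))
    have := conn_subset (isPreconnected_connectedComponentIn)
      (connectedComponentIn_subset _ _) (Nat.le_add_left 1 a) (Nat.le_add_left 1 b) h1 h2
    omega
  · intro n
    exact ⟨pt (n + 1), hptB _ (by omega), rfl⟩
end
end
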